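/- arXiv:0806.0440 — 5 statements merged into one kernel-verified Lean document; each statement's English description precedes it below -/
import Mathlib

section
/- Let a = (a_1,…,a_n) be a non-decreasing sequence of positive integers and let S = {i ∈ [n−1] : a_{i+1} is odd}. Then I_a(−1) = 0 if a_1 is even, and I_a(−1) = (−1)^{a_1+a_2+⋯+a_n−n} · β_n(S) if a_1 is odd. -/
open Finset

/-- `b` is an `a`-parking function: all entries are positive and the increasing
rearrangement `b ∘ Tuple.sort b` satisfies `b'_i ≤ a_i` (here `a` is 1-indexed). -/
def IsAPF {n : ℕ} (a : ℕ → ℕ) (b : Fin n → ℕ) : Prop :=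
  (∀ i, 1 ≤ b i) ∧ ∀ i : Fin n, (b ∘ Tuple.sort b) i ≤ a ((i : ℕ) + 1)

/-- The value of the permutation `σ` of `[n]` at (0-indexed) position `i`, as a natural number. -/
def permVal {n : ℕ} (σ : Equiv.Perm (Fin n)) (i : ℕ) : ℕ :=
  if h : i < n then (σ ⟨i, h⟩ : ℕ) else 0

/-- The descent set of `σ`, as a subset of `[n-1] = {1, …, n-1}` (1-indexed positions):
`i` is a descent when `σ_i > σ_{i+1}`. -/
def descSet {n : ℕ} (σ : Equiv.Perm (Fin n)) : Finset ℕ :=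
  (Finset.Icc 1 (n - 1)).filter fun i => permVal σ i < permVal σ (i - 1)

/-- `betaN n S` is the number of permutations of `[n]` with descent set `S`. -/
def betaN (n : ℕ) (S : Finset ℕ) : ℕ :=
  (Finset.univ.filter fun σ : Equiv.Perm (Fin n) => descSet σ = S).card

/-!
Write `w(b) = ∏ᵢ (-1)^(bᵢ - 1)`, so that `I_a(-1) = F(n)` with
`F(m) = ∑_{b ∈ P_{(a_1,…,a_m)}} w(b)`. The sum of `w` over the cube `[1, x]^m` factorises and
vanishes for `x = 2 a_m`. Split the cube according to the largest `j` such that every `t ≤ j`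
has at least `t` entries `≤ a_t`: the entries `≤ a_{j+1}` then occupy `j` positions and form an
`a`-parking function, and the other `m - j` entries range freely over `(a_{j+1}, x]`, where `w`
sums to `-1` or `0` as `a_{j+1}` is odd or even. This gives
`F(m) = ∑_{j < m, a_{j+1} odd} (-1)^(m-j+1) C(m,j) F(j)`.

For `β`, a permutation of `[m]` with no descent after position `s` is a shuffle: a pattern in
`S_s` on an `s`-set of values, then the complement in increasing order. With `s = max S` this gives
`β_m(S) = C(m,s) β_s(S \ {s}) - β_m(S \ {s})`, hence
`β_m(S) = ∑_{j ∈ {0} ∪ S} (-1)^#{t ∈ S | j < t} C(m,j) β_j({t ∈ S | t < j})`, which for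
`S = {i | a_{i+1} odd}` matches the recurrence for `F` up to the sign `(-1)^(a_1 + ⋯ + a_m - m)`.
-/

def altSign (c : ℕ) : ℤ := (-1) ^ (c - 1)

section Parking

variable {ι κ : Type*} [Fintype ι] [Fintype κ]

def numLE (b : ι → ℕ) (c : ℕ) : ℕ := #{i | b i ≤ c}

def ParksUpTo (a : ℕ → ℕ) (b : ι → ℕ) (j : ℕ) : Prop :=
  ∀ t ∈ Icc 1 j, t ≤ numLE b (a t)

instance (a : ℕ → ℕ) (b : ι → ℕ) : DecidablePred (ParksUpTo a b) :=
  fun _ => inferInstanceAs (Decidable (∀ t ∈ _, _))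

/-- The counting form of the `a`-parking condition, which makes sense for any finite index type;
see `isAPF_iff_isParking`. -/
def IsParking (a : ℕ → ℕ) (b : ι → ℕ) : Prop :=
  (∀ i, 1 ≤ b i) ∧ ParksUpTo a b (Fintype.card ι)

instance (a : ℕ → ℕ) : DecidablePred fun b : ι → ℕ => IsParking a b :=
  fun _ => inferInstanceAs (Decidable (_ ∧ _))

lemma numLE_comp_equiv (b : ι → ℕ) (e : κ ≃ ι) (c : ℕ) : numLE (b ∘ e) c = numLE b c :=
  card_equiv e (by simp)

lemma numLE_mono (b : ι → ℕ) {c c' : ℕ} (h : c ≤ c') : numLE b c ≤ numLE b c' :=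
  card_le_card (monotone_filter_right _ fun _ _ hi => hi.trans h)

lemma le_of_card_le_numLE {b : ι → ℕ} {c : ℕ} (h : Fintype.card ι ≤ numLE b c) (i : ι) :
    b i ≤ c := by
  have : numLE b c = #(univ : Finset ι) := le_antisymm (card_filter_le _ _) h
  exact (card_filter_eq_iff.mp this) i (mem_univ i)

lemma IsParking.le {a : ℕ → ℕ} {b : ι → ℕ} (h : IsParking a b) (i : ι) :
    b i ≤ a (Fintype.card ι) :=
  le_of_card_le_numLE (h.2 _ (mem_Icc.mpr ⟨Fintype.card_pos_iff.mpr ⟨i⟩, le_rfl⟩)) i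

lemma isParking_comp_equiv {a : ℕ → ℕ} {b : ι → ℕ} (e : κ ≃ ι) :
    IsParking a (b ∘ e) ↔ IsParking a b := by
  simp only [IsParking, ParksUpTo, numLE_comp_equiv, Fintype.card_congr e, e.forall_congr_left,
    Function.comp_apply, Equiv.apply_symm_apply]

def parkingFinset (a : ℕ → ℕ) (ι : Type*) [Fintype ι] [DecidableEq ι] : Finset (ι → ℕ) :=
  {b ∈ Fintype.piFinset fun _ => Icc 1 (a (Fintype.card ι)) | IsParking a b}

lemma mem_parkingFinset [DecidableEq ι] {a : ℕ → ℕ} {b : ι → ℕ} :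
    b ∈ parkingFinset a ι ↔ IsParking a b := by
  simp only [parkingFinset, mem_filter, Fintype.mem_piFinset, mem_Icc, and_iff_right_iff_imp]
  exact fun h i => ⟨h.1 i, h.le i⟩

/-- `I_a(-1)`, for `a`-parking functions indexed by `ι` rather than `Fin n`. -/
def parkingSum (a : ℕ → ℕ) (ι : Type*) [Fintype ι] [DecidableEq ι] : ℤ :=
  ∑ b ∈ parkingFinset a ι, ∏ i, altSign (b i)

lemma parkingSum_congr [DecidableEq ι] [DecidableEq κ] (a : ℕ → ℕ) (e : κ ≃ ι) :
    parkingSum a ι = parkingSum a κ := by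
  have he (b : ι → ℕ) : e.symm.arrowCongr (Equiv.refl ℕ) b = b ∘ e := by
    ext; simp [Equiv.arrowCongr_apply]
  refine sum_equiv (e.symm.arrowCongr (Equiv.refl ℕ)) (fun b => ?_) (fun b _ => ?_)
  · rw [he, mem_parkingFinset, mem_parkingFinset, isParking_comp_equiv]
  · simp [← e.prod_comp]

end Parking

lemma Monotone.le_iff_lt_numLE {n : ℕ} {f : Fin n → ℕ} (hf : Monotone f) (i : Fin n) (c : ℕ) :
    f i ≤ c ↔ (i : ℕ) < numLE f c := by
  constructor
  · intro h
    calc (i : ℕ) < #(Iic i) := by simp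
      _ ≤ numLE f c := card_le_card fun k hk => by
        simpa using (hf (mem_Iic.mp hk)).trans h
  · intro h
    by_contra! hc
    have : numLE f c ≤ #(Iio i) := card_le_card fun k hk => by
      simp only [mem_filter, mem_univ, true_and] at hk
      exact mem_Iio.mpr (lt_of_not_ge fun hik => (hk.trans_lt hc).not_ge (hf hik))
    rw [Fin.card_Iio] at this
    omega

lemma isAPF_iff_isParking {n : ℕ} (a : ℕ → ℕ) (b : Fin n → ℕ) : IsAPF a b ↔ IsParking a b := by
  refine and_congr_right fun _ => ?_
  simp only [ParksUpTo, Fintype.card_fin, (Tuple.monotone_sort b).le_iff_lt_numLE,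
    numLE_comp_equiv]
  constructor
  · intro h t ht
    obtain ⟨ht1, htn⟩ := mem_Icc.mp ht
    have := h ⟨t - 1, by omega⟩
    simp only [Nat.sub_add_cancel ht1] at this
    omega
  · exact fun h i => h (i + 1) (mem_Icc.mpr ⟨by omega, i.isLt⟩)

lemma neg_one_pow_sum_sub_card {ι : Type*} [Fintype ι] {b : ι → ℕ} (hb : ∀ i, 1 ≤ b i) :
    (-1 : ℤ) ^ ((∑ i, b i) - Fintype.card ι) = ∏ i, altSign (b i) := by
  have hsum : ∑ i, b i = ∑ i, (b i - 1) + Fintype.card ι := by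
    rw [← card_univ, card_eq_sum_ones, ← sum_add_distrib]
    exact sum_congr rfl fun i _ => by have := hb i; omega
  rw [hsum, Nat.add_sub_cancel, ← prod_pow_eq_pow_sum]
  rfl

lemma finsum_isAPF_eq_parkingSum {n : ℕ} (a : ℕ → ℕ) :
    ∑ᶠ b ∈ {b : Fin n → ℕ | IsAPF a b}, ((-1 : ℤ) ^ ((∑ i, b i) - n)) = parkingSum a (Fin n) := by
  have hset : {b : Fin n → ℕ | IsAPF a b} = ↑(parkingFinset a (Fin n)) := by
    ext b
    simp [isAPF_iff_isParking, mem_parkingFinset]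
  rw [hset, finsum_mem_coe_finset, parkingSum]
  refine sum_congr rfl fun b hb => ?_
  simpa using neg_one_pow_sum_sub_card (mem_parkingFinset.mp hb).1

lemma numLE_subtype {ι : Type*} (b : ι → ℕ) (T : Finset ι) (c : ℕ) :
    numLE (fun i : T => b i) c = #{i ∈ T | b i ≤ c} := by
  simp [numLE, filter_attach (fun i => b i ≤ c)]

section Goncharov

variable {ι : Type*} [Fintype ι] {a : ℕ → ℕ} {b : ι → ℕ}

def goncharovIndex (a : ℕ → ℕ) (b : ι → ℕ) : ℕ :=
  Nat.findGreatest (ParksUpTo a b) (Fintype.card ι)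

def parkedBlock (a : ℕ → ℕ) (b : ι → ℕ) : Finset ι :=
  if goncharovIndex a b < Fintype.card ι then univ.filter (b · ≤ a (goncharovIndex a b + 1))
  else univ

lemma goncharovIndex_le (a : ℕ → ℕ) (b : ι → ℕ) : goncharovIndex a b ≤ Fintype.card ι :=
  Nat.findGreatest_le _

lemma parksUpTo_goncharovIndex (a : ℕ → ℕ) (b : ι → ℕ) : ParksUpTo a b (goncharovIndex a b) :=
  Nat.findGreatest_spec (Nat.zero_le _) fun t ht => by simp at ht

lemma numLE_succ_goncharovIndex_le (h : goncharovIndex a b < Fintype.card ι) :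
    numLE b (a (goncharovIndex a b + 1)) ≤ goncharovIndex a b := by
  have hstop : ¬ ParksUpTo a b (goncharovIndex a b + 1) :=
    Nat.findGreatest_is_greatest (Nat.lt_succ_self _) h
  by_contra! hlt
  refine hstop fun t ht => ?_
  obtain ⟨ht1, ht⟩ := mem_Icc.mp ht
  rcases Nat.lt_or_ge t (goncharovIndex a b + 1) with ht' | ht'
  · exact parksUpTo_goncharovIndex a b t (mem_Icc.mpr ⟨ht1, by omega⟩)
  · rwa [le_antisymm ht ht']

lemma goncharovIndex_eq {j : ℕ} (hj : j ≤ Fintype.card ι) (hparks : ParksUpTo a b j)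
    (hstop : j < Fintype.card ι → numLE b (a (j + 1)) ≤ j) : goncharovIndex a b = j := by
  refine Nat.findGreatest_eq_iff.mpr ⟨hj, fun _ => hparks, fun k hjk hk hparks' => ?_⟩
  have := hparks' (j + 1) (mem_Icc.mpr ⟨by omega, hjk⟩)
  have := hstop (by omega)
  omega

variable (hmono : MonotoneOn a (Set.Icc 1 (Fintype.card ι)))
include hmono

lemma card_parkedBlock : #(parkedBlock a b) = goncharovIndex a b := by
  unfold parkedBlock
  split_ifs with h
  · refine le_antisymm (numLE_succ_goncharovIndex_le h) ?_
    rcases Nat.eq_zero_or_pos (goncharovIndex a b) with h0 | h0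
    · omega
    · calc goncharovIndex a b ≤ numLE b (a (goncharovIndex a b)) :=
            parksUpTo_goncharovIndex a b _ (mem_Icc.mpr ⟨h0, le_rfl⟩)
        _ ≤ _ := numLE_mono b (hmono ⟨h0, by omega⟩ ⟨by omega, h⟩ (by omega))
  · simpa using ((goncharovIndex_le a b).antisymm (not_lt.mp h)).symm

lemma mem_parkedBlock_of_le {t : ℕ} (ht1 : 1 ≤ t) (ht : t ≤ goncharovIndex a b) {i : ι}
    (hi : b i ≤ a t) : i ∈ parkedBlock a b := by
  unfold parkedBlock
  split_ifs with h
  · simp only [mem_filter, mem_univ, true_and]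
    exact hi.trans (hmono ⟨ht1, by omega⟩ ⟨by omega, h⟩ (by omega))
  · exact mem_univ i

lemma isParking_parkedBlock (hb : ∀ i, 1 ≤ b i) :
    IsParking a (fun i : parkedBlock a b => b i) := by
  refine ⟨fun i => hb i, fun t ht => ?_⟩
  rw [Fintype.card_coe, card_parkedBlock hmono] at ht
  obtain ⟨ht1, htj⟩ := mem_Icc.mp ht
  have hfilter : {i ∈ parkedBlock a b | b i ≤ a t} = ({i | b i ≤ a t} : Finset ι) := by
    ext i
    simpa using mem_parkedBlock_of_le hmono ht1 htj
  rw [numLE_subtype, hfilter]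
  exact parksUpTo_goncharovIndex a b t ht

lemma lt_of_notMem_parkedBlock {i : ι} (hi : i ∉ parkedBlock a b) :
    a (#(parkedBlock a b) + 1) < b i := by
  rw [card_parkedBlock hmono]
  unfold parkedBlock at hi
  split_ifs at hi
  · simpa using hi
  · exact absurd (mem_univ i) hi

lemma parkedBlock_eq_of_isParking {T : Finset ι} (hpark : IsParking a (fun i : T => b i))
    (hout : ∀ i ∉ T, a (#T + 1) < b i) : parkedBlock a b = T := by
  have hsub (i : ι) (h : b i ≤ a (#T + 1)) : i ∈ T := by
    by_contra hi
    exact (hout i hi).not_ge h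
  have hgi : goncharovIndex a b = #T := by
    refine goncharovIndex_eq (card_le_univ T) (fun t ht => ?_) (fun _ => ?_)
    · calc t ≤ numLE (fun i : T => b i) (a t) := hpark.2 t (by rwa [Fintype.card_coe])
        _ ≤ numLE b (a t) := by
          rw [numLE_subtype]
          exact card_le_card (filter_subset_filter _ (subset_univ T))
    · exact card_le_card fun i hi => hsub i (by simpa using hi)
  unfold parkedBlock
  rw [hgi]
  split_ifs with h
  · ext i
    simp only [mem_filter, mem_univ, true_and]
    refine ⟨hsub i, fun hi => ?_⟩
    have hT : 1 ≤ #T := card_pos.mpr ⟨i, hi⟩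
    calc b i ≤ a (Fintype.card T) := hpark.le ⟨i, hi⟩
      _ ≤ a (#T + 1) := by
        rw [Fintype.card_coe]
        exact hmono ⟨hT, by omega⟩ ⟨by omega, h⟩ (by omega)
  · exact (eq_univ_of_card T (by have := card_le_univ T; omega)).symm

lemma parkedBlock_eq_iff (hb : ∀ i, 1 ≤ b i) (T : Finset ι) :
    parkedBlock a b = T ↔ IsParking a (fun i : T => b i) ∧ ∀ i ∉ T, a (#T + 1) < b i := by
  constructor
  · rintro rfl
    exact ⟨isParking_parkedBlock hmono hb, fun i => lt_of_notMem_parkedBlock hmono⟩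
  · exact fun ⟨hpark, hout⟩ => parkedBlock_eq_of_isParking hmono hpark hout

lemma sum_parkedBlock_eq [DecidableEq ι] {x : ℕ} (hx : a (Fintype.card ι) ≤ x) (T : Finset ι) :
    ∑ b ∈ Fintype.piFinset (fun _ : ι => Icc 1 x) with parkedBlock a b = T, ∏ i, altSign (b i) =
      parkingSum a T * (∑ c ∈ Ioc (a (#T + 1)) x, altSign c) ^ (Fintype.card ι - #T) := by
  have hpow : (∑ c ∈ Ioc (a (#T + 1)) x, altSign c) ^ (Fintype.card ι - #T) =
      ∑ g ∈ Fintype.piFinset (fun _ : {i // i ∉ T} => Ioc (a (#T + 1)) x),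
        ∏ i, altSign (g i) := by
    rw [← prod_univ_sum, prod_const, card_univ, Fintype.card_subtype_compl, Fintype.card_coe]
  rw [hpow, parkingSum, sum_mul_sum, ← sum_product']
  refine sum_equiv (Equiv.piEquivPiSubtypeProd (· ∈ T) fun _ => ℕ) (fun b => ?_) (fun b _ => ?_)
  · simp only [mem_filter, mem_product, Fintype.mem_piFinset, mem_parkingFinset, mem_Icc, mem_Ioc,
      Equiv.piEquivPiSubtypeProd_apply, Subtype.forall]
    constructor
    · rintro ⟨hbx, hT⟩
      obtain ⟨hpark, hout⟩ := (parkedBlock_eq_iff hmono (fun i => (hbx i).1) T).mp hT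
      exact ⟨hpark, fun i hi => ⟨hout i hi, (hbx i).2⟩⟩
    · rintro ⟨hpark, hout⟩
      have hbx (i : ι) : 1 ≤ b i ∧ b i ≤ x := by
        by_cases hi : i ∈ T
        · have hT : 1 ≤ #T := card_pos.mpr ⟨i, hi⟩
          have hmonoT : a (Fintype.card T) ≤ a (Fintype.card ι) := by
            rw [Fintype.card_coe]
            exact hmono ⟨hT, card_le_univ T⟩ ⟨hT.trans (card_le_univ T), le_rfl⟩ (card_le_univ T)
          exact ⟨hpark.1 ⟨i, hi⟩, ((hpark.le ⟨i, hi⟩).trans hmonoT).trans hx⟩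
        · have := hout i hi
          omega
      refine ⟨hbx, (parkedBlock_eq_iff hmono (fun i => (hbx i).1) T).mpr ⟨hpark, ?_⟩⟩
      exact fun i hi => (hout i hi).1
  · rw [← Fintype.prod_subtype_mul_prod_subtype (· ∈ T) fun i => altSign (b i)]
    congr 1
    exact prod_congr (congrArg _ (Subsingleton.elim _ _)) fun _ _ => rfl

lemma sum_piFinset_Icc_eq [DecidableEq ι] {x : ℕ} (hx : a (Fintype.card ι) ≤ x) :
    ∑ b ∈ Fintype.piFinset (fun _ : ι => Icc 1 x), ∏ i, altSign (b i) =
      ∑ j ∈ range (Fintype.card ι + 1), (Fintype.card ι).choose j •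
        (parkingSum a (Fin j) * (∑ c ∈ Ioc (a (j + 1)) x, altSign c) ^ (Fintype.card ι - j)) := by
  rw [← sum_fiberwise _ (parkedBlock a), ← powerset_univ]
  simp_rw [sum_parkedBlock_eq hmono hx, fun T : Finset ι => parkingSum_congr a T.equivFin.symm]
  exact sum_powerset_apply_card
    (fun j => parkingSum a (Fin j) * (∑ c ∈ Ioc (a (j + 1)) x, altSign c) ^ (Fintype.card ι - j))

end Goncharov

lemma sum_altSign_Ioc {t x : ℕ} (h : t ≤ x) :
    ∑ c ∈ Ioc t x, altSign c = (if Odd x then 1 else 0) - if Odd t then 1 else 0 := by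
  induction x, h using Nat.le_induction with
  | base => simp
  | succ x htx ih =>
    have hstep : (if Odd (x + 1) then (1 : ℤ) else 0) = (if Odd x then 1 else 0) + (-1) ^ x := by
      rcases Nat.even_or_odd x with hx | hx
      · simp [hx.neg_one_pow, Nat.not_odd_iff_even.mpr hx, Nat.odd_add_one]
      · simp [hx.neg_one_pow, hx, Nat.odd_add_one]
    rw [sum_Ioc_succ_top htx, ih, altSign, Nat.add_sub_cancel, hstep]
    ring

lemma parkingSum_fin_eq_sum {a : ℕ → ℕ} {m : ℕ} (hm : 1 ≤ m) (hmono : MonotoneOn a (Set.Icc 1 m)) :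
    parkingSum a (Fin m) = ∑ j ∈ range m with Odd (a (j + 1)),
      (-1) ^ (m - j + 1) * m.choose j * parkingSum a (Fin j) := by
  have hx : Even (2 * a m) := even_two_mul _
  have hcube := sum_piFinset_Icc_eq (ι := Fin m) (by simpa using hmono) (x := 2 * a m)
    (by rw [Fintype.card_fin]; omega)
  have hIcc : Icc 1 (2 * a m) = Ioc 0 (2 * a m) := Icc_add_one_left_eq_Ioc 0 _
  rw [← prod_univ_sum, prod_const, hIcc, sum_altSign_Ioc (Nat.zero_le _),
    if_neg (Nat.not_odd_iff_even.mpr hx), if_neg Nat.not_odd_zero, sub_zero,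
    card_univ, Fintype.card_fin, zero_pow (by omega)] at hcube
  simp only [sum_range_succ, Nat.choose_self, Nat.sub_self, pow_zero,
    one_smul, mul_one] at hcube
  have hterm : ∀ j ∈ range m,
      m.choose j • (parkingSum a (Fin j) * (∑ c ∈ Ioc (a (j + 1)) (2 * a m), altSign c) ^ (m - j))
        = if Odd (a (j + 1)) then -((-1) ^ (m - j + 1) * m.choose j * parkingSum a (Fin j))
          else 0 := by
    intro j hj
    have hj : j < m := mem_range.mp hj
    have : a (j + 1) ≤ 2 * a m :=
      (hmono ⟨by omega, by omega⟩ ⟨hm, le_rfl⟩ (by omega)).trans (by omega)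
    rw [sum_altSign_Ioc this, if_neg (Nat.not_odd_iff_even.mpr hx)]
    split_ifs with hodd
    · rw [nsmul_eq_mul, pow_succ]
      ring
    · simp [zero_pow (Nat.sub_ne_zero_of_lt hj)]
  rw [sum_congr rfl hterm, ← sum_filter, sum_neg_distrib] at hcube
  linarith

section Descents

open Equiv

lemma mem_descSet {n : ℕ} (σ : Perm (Fin n)) {i : ℕ} (hi : i < n) :
    i ∈ descSet σ ↔ 1 ≤ i ∧ σ ⟨i, hi⟩ < σ ⟨i - 1, by omega⟩ := by
  unfold descSet permVal
  rw [mem_filter, mem_Icc, dif_pos hi, dif_pos (show i - 1 < n by omega), Fin.lt_def]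
  constructor
  · exact fun ⟨⟨h1, _⟩, h⟩ => ⟨h1, h⟩
  · exact fun ⟨h1, h⟩ => ⟨⟨h1, by omega⟩, h⟩

lemma descSet_subset {n : ℕ} (σ : Perm (Fin n)) : descSet σ ⊆ Icc 1 (n - 1) :=
  filter_subset _ _

lemma notMem_descSet_of_le {n i : ℕ} (σ : Perm (Fin n)) (h : n ≤ i) : i ∉ descSet σ :=
  fun hi => by have := mem_Icc.mp (descSet_subset σ hi); omega

lemma zero_notMem_descSet {n : ℕ} (σ : Perm (Fin n)) : 0 ∉ descSet σ :=
  fun hi => by have := mem_Icc.mp (descSet_subset σ hi); omega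

lemma mem_descSet_iff_of_castAdd {s r : ℕ} {σ : Perm (Fin (s + r))} {τ : Perm (Fin s)}
    (h : ∀ k l, σ (Fin.castAdd r k) < σ (Fin.castAdd r l) ↔ τ k < τ l) {i : ℕ} (hi : i < s) :
    i ∈ descSet σ ↔ i ∈ descSet τ := by
  rw [mem_descSet σ (by omega), mem_descSet τ hi]
  exact and_congr_right fun _ => h ⟨i, hi⟩ ⟨i - 1, by omega⟩

lemma strictMono_natAdd_iff {s r : ℕ} (σ : Perm (Fin (s + r))) :
    StrictMono (σ ∘ Fin.natAdd s) ↔ ∀ i, s < i → i ∉ descSet σ := by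
  constructor
  · intro h i hsi hi
    have hin : i < s + r := by have := mem_Icc.mp (descSet_subset σ hi); omega
    rw [mem_descSet σ hin] at hi
    have hlt := h (show (⟨i - 1 - s, by omega⟩ : Fin r) < ⟨i - s, by omega⟩ from
      Fin.mk_lt_mk.mpr (by omega))
    have e1 : Fin.natAdd s (⟨i - 1 - s, by omega⟩ : Fin r) = ⟨i - 1, by omega⟩ :=
      Fin.ext (by simp only [Fin.val_natAdd]; omega)
    have e2 : Fin.natAdd s (⟨i - s, by omega⟩ : Fin r) = ⟨i, hin⟩ :=
      Fin.ext (by simp only [Fin.val_natAdd]; omega)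
    simp only [Function.comp_apply, e1, e2] at hlt
    exact lt_asymm hi.2 hlt
  · intro h
    cases r with
    | zero => exact fun k => k.elim0
    | succ r =>
      refine Fin.strictMono_iff_lt_succ.mpr fun k => ?_
      have hk := h (s + k + 1) (by omega)
      rw [mem_descSet σ (by omega), not_and, not_lt] at hk
      have e1 : Fin.natAdd s k.castSucc = ⟨s + k + 1 - 1, by omega⟩ := Fin.ext (by simp)
      have e2 : Fin.natAdd s k.succ = ⟨s + k + 1, by omega⟩ :=
        Fin.ext (by simp only [Fin.val_natAdd, Fin.val_succ]; omega)
      simp only [Function.comp_apply, e1, e2]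
      refine lt_of_le_of_ne (hk (by omega)) fun heq => ?_
      simpa [Fin.ext_iff] using σ.injective heq

section Shuffle

variable {s r : ℕ}

lemma card_compl_eq_of_card_eq {V : Finset (Fin (s + r))} (hV : #V = s) : #Vᶜ = r := by
  rw [card_compl, hV, Fintype.card_fin]
  omega

def headSet (σ : Perm (Fin (s + r))) : Finset (Fin (s + r)) :=
  univ.map ((Fin.castAddEmb r).trans σ.toEmbedding)

noncomputable def shuffle (V : Finset (Fin (s + r))) (hV : #V = s) (τ : Perm (Fin s)) :
    Perm (Fin (s + r)) :=
  Equiv.ofBijective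
    (Fin.append (V.orderEmbOfFin hV ∘ τ) (Vᶜ.orderEmbOfFin (card_compl_eq_of_card_eq hV)))
    (Finite.injective_iff_bijective.mp (Fin.append_injective_iff.mpr
      ⟨(V.orderEmbOfFin hV).injective.comp τ.injective, (Vᶜ.orderEmbOfFin _).injective,
        fun _ l h => mem_compl.mp (h ▸ orderEmbOfFin_mem Vᶜ _ l) (orderEmbOfFin_mem V hV _)⟩))

variable {V : Finset (Fin (s + r))} (hV : #V = s)

@[simp]
lemma shuffle_castAdd (τ : Perm (Fin s)) (k : Fin s) :
    shuffle V hV τ (Fin.castAdd r k) = V.orderEmbOfFin hV (τ k) := by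
  simp [shuffle]

@[simp]
lemma shuffle_natAdd (τ : Perm (Fin s)) (k : Fin r) :
    shuffle V hV τ (Fin.natAdd s k) = Vᶜ.orderEmbOfFin (card_compl_eq_of_card_eq hV) k := by
  simp [shuffle]

lemma headSet_shuffle (τ : Perm (Fin s)) : headSet (shuffle V hV τ) = V := by
  refine eq_of_subset_of_card_le (fun v hv => ?_) (by simp [headSet, hV])
  obtain ⟨k, -, rfl⟩ := mem_map.mp hv
  simp

lemma descSet_shuffle_sdiff (τ : Perm (Fin s)) : descSet (shuffle V hV τ) \ {s} = descSet τ := by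
  ext i
  rw [mem_sdiff, mem_singleton]
  rcases lt_trichotomy i s with hi | rfl | hi
  · rw [mem_descSet_iff_of_castAdd (τ := τ) (fun k l => by simp) hi, and_iff_left hi.ne]
  · simpa using notMem_descSet_of_le τ le_rfl
  · have htail : StrictMono (shuffle V hV τ ∘ Fin.natAdd s) := by
      simpa [Function.comp_def] using (Vᶜ.orderEmbOfFin _).strictMono
    simp [(strictMono_natAdd_iff _).mp htail i hi, notMem_descSet_of_le τ hi.le]

lemma shuffle_injective : Function.Injective (shuffle V hV) := fun τ₁ τ₂ h =>
  Equiv.ext fun k => by simpa using congrArg (· (Fin.castAdd r k)) h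

lemma exists_shuffle_eq {σ : Perm (Fin (s + r))} (hσ : headSet σ = V)
    (htail : StrictMono (σ ∘ Fin.natAdd s)) : ∃ τ, shuffle V hV τ = σ := by
  have hhead (k : Fin s) : σ (Fin.castAdd r k) ∈ V := hσ ▸ mem_map_of_mem _ (mem_univ k)
  let f (k : Fin s) : Fin s := (V.orderIsoOfFin hV).symm ⟨σ (Fin.castAdd r k), hhead k⟩
  have hf : Function.Injective f := fun k l h => by
    simpa using σ.injective (Subtype.ext_iff.mp ((V.orderIsoOfFin hV).symm.injective h))
  refine ⟨Equiv.ofBijective f (Finite.injective_iff_bijective.mp hf), Equiv.ext fun i => ?_⟩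
  induction i using Fin.addCases with
  | left k => simp [f, ← coe_orderIsoOfFin_apply]
  | right k =>
    have htailV (l : Fin r) : σ (Fin.natAdd s l) ∈ Vᶜ := by
      rw [mem_compl, ← hσ]
      simp only [headSet, mem_map, mem_univ, true_and, Function.Embedding.trans_apply,
        Equiv.coe_toEmbedding, EmbeddingLike.apply_eq_iff_eq, not_exists]
      exact fun j h => by
        simp only [Fin.coe_castAddEmb, Fin.ext_iff, Fin.val_castAdd, Fin.val_natAdd] at h
        omega
    rw [shuffle_natAdd]
    exact congrFun (orderEmbOfFin_unique _ htailV htail).symm k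

end Shuffle

lemma card_filter_descSet_sdiff {n s : ℕ} (hsn : s ≤ n) {S : Finset ℕ} (hS : S ⊆ Icc 1 (s - 1)) :
    #{σ : Perm (Fin n) | descSet σ \ {s} = S} = n.choose s * betaN s S := by
  obtain ⟨r, rfl⟩ := Nat.exists_eq_add_of_le hsn
  rw [card_eq_sum_card_fiberwise (f := headSet) (t := powersetCard s univ)
    (fun σ _ => by simp [headSet])]
  rw [sum_const_nat (m := betaN s S) fun V hV => ?_, card_powersetCard, card_univ,
    Fintype.card_fin]
  have hV : #V = s := mem_powersetCard_univ.mp hV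
  rw [filter_filter, betaN]
  symm
  refine card_bij (fun τ _ => shuffle V hV τ) (fun τ hτ => ?_)
    (fun τ₁ _ τ₂ _ h => shuffle_injective hV h) (fun σ hσ => ?_)
  · simp only [mem_filter, mem_univ, true_and] at hτ ⊢
    exact ⟨by rw [descSet_shuffle_sdiff, hτ], headSet_shuffle hV τ⟩
  · simp only [mem_filter, mem_univ, true_and] at hσ
    obtain ⟨hdesc, hhead⟩ := hσ
    have htail : StrictMono (σ ∘ Fin.natAdd s) := (strictMono_natAdd_iff σ).mpr fun i hi hmem => by
      have : i ∈ S := hdesc ▸ mem_sdiff.mpr ⟨hmem, by rw [mem_singleton]; omega⟩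
      have := mem_Icc.mp (hS this)
      omega
    obtain ⟨τ, rfl⟩ := exists_shuffle_eq hV hhead htail
    exact ⟨τ, by simpa [descSet_shuffle_sdiff] using hdesc, rfl⟩

lemma sdiff_singleton_eq_iff {α : Type*} [DecidableEq α] {A S : Finset α} {a : α} (ha : a ∉ S) :
    A \ {a} = S ↔ A = S ∨ A = insert a S := by
  rw [sdiff_singleton_eq_erase]
  constructor
  · rintro rfl
    by_cases h : a ∈ A
    · exact Or.inr (insert_erase h).symm
    · exact Or.inl (erase_eq_self.mpr h).symm
  · rintro (rfl | rfl)
    · exact erase_eq_self.mpr ha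
    · exact erase_insert ha

lemma card_filter_descSet_sdiff_eq_add {n s : ℕ} {S : Finset ℕ} (hs : s ∉ S) :
    #{σ : Perm (Fin n) | descSet σ \ {s} = S} = betaN n S + betaN n (insert s S) := by
  simp_rw [sdiff_singleton_eq_iff hs, filter_or, betaN]
  refine card_union_of_disjoint (disjoint_filter.mpr fun σ _ h h' => hs ?_)
  exact h ▸ h' ▸ mem_insert_self s S

lemma betaN_empty (n : ℕ) : betaN n ∅ = 1 := by
  have h := card_filter_descSet_sdiff (n := n) (Nat.zero_le n) (empty_subset _)
  simp only [sdiff_singleton_eq_erase, erase_eq_of_notMem (zero_notMem_descSet _),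
    Nat.choose_zero_right, one_mul] at h
  rw [betaN, h]
  rfl

lemma betaN_insert {n s : ℕ} {S : Finset ℕ} (hsn : s ≤ n) (hS : S ⊆ Icc 1 (s - 1)) (hs : s ∉ S) :
    (betaN n (insert s S) : ℤ) = n.choose s * betaN s S - betaN n S := by
  have h := (card_filter_descSet_sdiff hsn hS).symm.trans (card_filter_descSet_sdiff_eq_add hs)
  rw [eq_sub_iff_add_eq, ← Nat.cast_mul, h]
  push_cast
  ring

lemma betaN_eq_sum {n : ℕ} {S : Finset ℕ} (hS : S ⊆ Icc 1 (n - 1)) :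
    (betaN n S : ℤ) = ∑ j ∈ insert 0 S,
      (-1 : ℤ) ^ #{t ∈ S | j < t} * n.choose j * betaN j {t ∈ S | t < j} := by
  induction S using Finset.induction_on_max with
  | empty => simp [betaN_empty]
  | insert s S hlt ih =>
    have hs : s ∈ Icc 1 (n - 1) := hS (mem_insert_self s S)
    rw [mem_Icc] at hs
    have hsS : s ∉ S := fun h => lt_irrefl s (hlt s h)
    have hSs : S ⊆ Icc 1 (s - 1) := fun t ht => by
      have := mem_Icc.mp (hS (mem_insert_of_mem ht))
      have := hlt t ht
      exact mem_Icc.mpr ⟨by omega, by omega⟩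
    rw [betaN_insert (by omega) hSs hsS, ih ((subset_insert s S).trans hS), insert_comm,
      sum_insert (s := insert 0 S) (by simp only [mem_insert, not_or]; exact ⟨by omega, hsS⟩)]
    have hjs : ∀ j ∈ insert 0 S, j < s := by
      simpa using ⟨by omega, hlt⟩
    have hterm : ∀ j ∈ insert 0 S,
        (-1 : ℤ) ^ #{t ∈ insert s S | j < t} * n.choose j * betaN j {t ∈ insert s S | t < j} =
          -((-1) ^ #{t ∈ S | j < t} * n.choose j * betaN j {t ∈ S | t < j}) := by
      intro j hj
      rw [filter_insert, if_pos (hjs j hj), filter_insert, if_neg (hjs j hj).not_gt,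
        card_insert_of_notMem (by simp [hsS]), pow_succ]
      ring
    rw [sum_congr rfl hterm, sum_neg_distrib, filter_insert, if_neg (lt_irrefl s),
      filter_insert, if_neg (lt_irrefl s), filter_false_of_mem fun t ht => (hlt t ht).not_gt,
      filter_true_of_mem hlt, card_empty, pow_zero, one_mul]
    ring

end Descents

lemma parkingSum_fin_eq_zero_of_even {a : ℕ → ℕ} (ha : Even (a 1)) {m : ℕ} (hm : 1 ≤ m)
    (hmono : MonotoneOn a (Set.Icc 1 m)) : parkingSum a (Fin m) = 0 := by
  induction m using Nat.strong_induction_on with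
  | _ m ih =>
  rw [parkingSum_fin_eq_sum hm hmono]
  refine sum_eq_zero fun j hj => ?_
  obtain ⟨hjm, hodd⟩ := by simpa using hj
  have hj0 : j ≠ 0 := by rintro rfl; exact Nat.not_odd_iff_even.mpr ha hodd
  rw [ih j hjm (by omega) (hmono.mono (Set.Icc_subset_Icc_right hjm.le)), mul_zero]

lemma parkingSum_fin_zero (a : ℕ → ℕ) : parkingSum a (Fin 0) = 1 := by
  simp [parkingSum, parkingFinset, IsParking, ParksUpTo]

lemma card_filter_odd_Ioc {a : ℕ → ℕ} {j m : ℕ} (hjm : j < m) (hodd : Odd (a (j + 1))) :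
    #{t ∈ Ioc j m | Odd (a t)} = #{i ∈ {i ∈ Icc 1 (m - 1) | Odd (a (i + 1))} | j < i} + 1 := by
  have hset : {t ∈ Ioc j m | Odd (a t)} =
      (insert j {i ∈ {i ∈ Icc 1 (m - 1) | Odd (a (i + 1))} | j < i}).map (addRightEmbedding 1) := by
    ext t
    simp only [mem_filter, mem_Ioc, mem_map, mem_insert, mem_Icc, addRightEmbedding_apply]
    constructor
    · rintro ⟨⟨hjt, htm⟩, ht⟩
      refine ⟨t - 1, ?_, by omega⟩
      rcases eq_or_ne t (j + 1) with rfl | hne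
      · exact Or.inl rfl
      · refine Or.inr ⟨⟨⟨by omega, by omega⟩, ?_⟩, by omega⟩
        rwa [Nat.sub_add_cancel (by omega)]
    · rintro ⟨i, rfl | ⟨⟨⟨hi1, him⟩, hi⟩, hji⟩, rfl⟩
      · exact ⟨⟨by omega, by omega⟩, hodd⟩
      · exact ⟨⟨by omega, by omega⟩, hi⟩
  rw [hset, card_map, card_insert_of_notMem (by simp)]

lemma neg_one_pow_sum_Icc_sub_eq {a : ℕ → ℕ} {j m : ℕ} (hpos : ∀ i ∈ Icc 1 m, 1 ≤ a i)
    (hjm : j < m) (hodd : Odd (a (j + 1))) :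
    (-1 : ℤ) ^ (m - j + 1) * (-1) ^ ((∑ i ∈ Icc 1 j, a i) - j) =
      (-1) ^ ((∑ i ∈ Icc 1 m, a i) - m) *
        (-1) ^ #{i ∈ {i ∈ Icc 1 (m - 1) | Odd (a (i + 1))} | j < i} := by
  have hsplit : ∑ i ∈ Icc 1 j, a i + ∑ i ∈ Ioc j m, a i = ∑ i ∈ Icc 1 m, a i := by
    have hIcc (k : ℕ) : Icc 1 k = Ioc 0 k := Icc_add_one_left_eq_Ioc 0 k
    rw [hIcc, hIcc]
    exact sum_Ioc_consecutive _ (Nat.zero_le j) hjm.le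
  have hge (k : ℕ) (hk : k ≤ m) : k ≤ ∑ i ∈ Icc 1 k, a i := by
    simpa using card_nsmul_le_sum (Icc 1 k) a 1 fun i hi => hpos i (by rw [mem_Icc] at hi ⊢; omega)
  have hpar := (even_sum_iff_even_card_odd (s := Ioc j m) a)
  rw [card_filter_odd_Ioc hjm hodd, Nat.even_iff, Nat.even_iff] at hpar
  rw [← pow_add, ← pow_add, neg_one_pow_eq_pow_mod_two, neg_one_pow_eq_pow_mod_two (n := _ + _)]
  congr 1
  have := hge j hjm.le
  have := hge m le_rfl
  omega

lemma parkingSum_fin_eq_of_odd {a : ℕ → ℕ} (ha : Odd (a 1)) {m : ℕ}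
    (hpos : ∀ i ∈ Icc 1 m, 1 ≤ a i) (hmono : MonotoneOn a (Set.Icc 1 m)) :
    parkingSum a (Fin m) =
      (-1) ^ ((∑ i ∈ Icc 1 m, a i) - m) * betaN m {i ∈ Icc 1 (m - 1) | Odd (a (i + 1))} := by
  induction m using Nat.strong_induction_on with
  | _ m ih =>
  rcases Nat.eq_zero_or_pos m with rfl | hm
  · simp [parkingSum_fin_zero, betaN_empty]
  set S := {i ∈ Icc 1 (m - 1) | Odd (a (i + 1))}
  have hrange : {j ∈ range m | Odd (a (j + 1))} = insert 0 S := by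
    ext j
    simp only [S, mem_filter, mem_range, mem_insert, mem_Icc]
    constructor
    · rintro ⟨hjm, hj⟩
      rcases Nat.eq_zero_or_pos j with rfl | hj0
      · exact Or.inl rfl
      · exact Or.inr ⟨⟨hj0, by omega⟩, hj⟩
    · rintro (rfl | ⟨⟨_, hjm⟩, hj⟩)
      · exact ⟨hm, ha⟩
      · exact ⟨by omega, hj⟩
  rw [parkingSum_fin_eq_sum hm hmono, hrange, betaN_eq_sum (filter_subset _ _), mul_sum]
  refine sum_congr rfl fun j hj => ?_
  have hjm : j < m := by
    rcases mem_insert.mp hj with rfl | hj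
    · exact hm
    · have := mem_Icc.mp (mem_filter.mp hj).1; omega
  have hodd : Odd (a (j + 1)) := by
    rcases mem_insert.mp hj with rfl | hj
    · exact ha
    · exact (mem_filter.mp hj).2
  have hSj : {i ∈ Icc 1 (j - 1) | Odd (a (i + 1))} = {t ∈ S | t < j} := by
    ext i
    simp only [S, mem_filter, mem_Icc]
    constructor
    · rintro ⟨⟨hi1, hij⟩, hi⟩
      exact ⟨⟨⟨hi1, by omega⟩, hi⟩, by omega⟩
    · rintro ⟨⟨⟨hi1, -⟩, hi⟩, hij⟩
      exact ⟨⟨hi1, by omega⟩, hi⟩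
  rw [ih j hjm (fun i hi => hpos i (Icc_subset_Icc_right hjm.le hi))
    (hmono.mono (Set.Icc_subset_Icc_right hjm.le)), hSj]
  calc (-1 : ℤ) ^ (m - j + 1) * m.choose j *
        ((-1) ^ ((∑ i ∈ Icc 1 j, a i) - j) * betaN j {t ∈ S | t < j})
      = ((-1) ^ (m - j + 1) * (-1) ^ ((∑ i ∈ Icc 1 j, a i) - j)) *
          (m.choose j * betaN j {t ∈ S | t < j}) := by ring
    _ = _ := by
      rw [neg_one_pow_sum_Icc_sub_eq hpos hjm hodd]
      ring

/-- Theorem 2.4: for a non-decreasing sequence `a` of positive integers,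
`I_a(-1) = 0` if `a_1` is even, and `I_a(-1) = (-1)^{a_1+⋯+a_n-n} β_n(S)` if `a_1`
is odd, where `S = {i ∈ [n-1] : a_{i+1} is odd}`. -/
theorem stmt0 (n : ℕ) (hn : 1 ≤ n) (a : ℕ → ℕ)
    (hpos : ∀ i, 1 ≤ i → i ≤ n → 1 ≤ a i)
    (hmono : ∀ i j, 1 ≤ i → i ≤ j → j ≤ n → a i ≤ a j) :
    (Even (a 1) →
      ∑ᶠ b ∈ {b : Fin n → ℕ | IsAPF a b}, ((-1 : ℤ) ^ ((∑ i, b i) - n)) = 0) ∧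
    (Odd (a 1) →
      ∑ᶠ b ∈ {b : Fin n → ℕ | IsAPF a b}, ((-1 : ℤ) ^ ((∑ i, b i) - n)) =
        (-1) ^ ((∑ i ∈ Finset.Icc 1 n, a i) - n) *
          betaN n ((Finset.Icc 1 (n - 1)).filter fun i => Odd (a (i + 1)))) := by
  have hmono' : MonotoneOn a (Set.Icc 1 n) := fun i hi j hj hij => hmono i j hi.1 hij hj.2
  rw [finsum_isAPF_eq_parkingSum]
  exact ⟨fun ha => parkingSum_fin_eq_zero_of_even ha hn hmono',
    fun ha => parkingSum_fin_eq_of_odd ha (fun i hi => hpos i (mem_Icc.mp hi).1 (mem_Icc.mp hi).2)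
      hmono'⟩
end

section
/- Let a = (a_1,…,a_n) be a non-decreasing sequence of positive integers and let b = (b_1,…,b_n) be any sequence of positive integers with increasing rearrangement b'_1 ≤ … ≤ b'_n. In the construction of H(b), the cell placed in the i-th column from the right lies in row b'_i; consequently, all cells of H(b) lie inside the Young diagram Y_a if and only if b is an a-parking function. -/
open Finset

/-- `cnt b j` is the number of entries of `b` which are at most `j`. -/
def cnt {n : ℕ} (b : Fin n → ℕ) (j : ℕ) : ℕ := (Finset.univ.filter fun i => b i ≤ j).card

/-- In the construction of `H(b)`, the cells placed in row `j` occupy the from-the-right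
column positions `cnt b (j-1) + 1, …, cnt b j`; hence the row of the `i`-th column
from the right (`i` 1-indexed) is the least `j` with `i ≤ cnt b j`. -/
noncomputable def rowHb {n : ℕ} (b : Fin n → ℕ) (i : ℕ) : ℕ := sInf {j : ℕ | i ≤ cnt b j}

/-!
Counting entries is invariant under sorting, and for the increasing rearrangement `b'` the
entries `≤ j` form an initial segment. Hence `i < cnt b j ↔ b'_i ≤ j`, so the least row `j`
whose count reaches the `(i+1)`-st column is `b'_i`.
-/

theorem cnt_comp_sort {n : ℕ} (b : Fin n → ℕ) (j : ℕ) : cnt (b ∘ Tuple.sort b) j = cnt b j :=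
  Finset.card_equiv (Tuple.sort b) fun i => by simp

theorem Monotone.lt_card_filter_le_iff {α : Type*} [LinearOrder α] {n : ℕ} {f : Fin n → α}
    (hf : Monotone f) (i : Fin n) (x : α) : (i : ℕ) < #{k | f k ≤ x} ↔ f i ≤ x := by
  constructor
  · intro hlt
    by_contra! hx
    have hsub : ({k | f k ≤ x} : Finset (Fin n)) ⊆ Iio i := fun k hk => by
      simp only [mem_filter, mem_univ, true_and] at hk
      exact mem_Iio.mpr (hf.reflect_lt (hk.trans_lt hx))
    have := card_le_card hsub
    rw [Fin.card_Iio] at this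
    omega
  · intro hx
    have hsub : Iic i ⊆ ({k | f k ≤ x} : Finset (Fin n)) := fun k hk => by
      simpa using (hf (mem_Iic.mp hk)).trans hx
    have := card_le_card hsub
    rw [Fin.card_Iic] at this
    omega

theorem lt_cnt_iff {n : ℕ} (b : Fin n → ℕ) (i : Fin n) (j : ℕ) :
    (i : ℕ) < cnt b j ↔ (b ∘ Tuple.sort b) i ≤ j := by
  rw [← cnt_comp_sort]
  exact (Tuple.monotone_sort b).lt_card_filter_le_iff i j

theorem rowHb_succ {n : ℕ} (b : Fin n → ℕ) (i : Fin n) :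
    rowHb b ((i : ℕ) + 1) = (b ∘ Tuple.sort b) i := by
  have hrows : {j : ℕ | (i : ℕ) + 1 ≤ cnt b j} = Set.Ici ((b ∘ Tuple.sort b) i) :=
    Set.ext fun j => lt_cnt_iff b i j
  rw [rowHb, hrows, csInf_Ici]

theorem stmt8_general (n : ℕ) (a : ℕ → ℕ)
    (b : Fin n → ℕ) (hb : ∀ i, 1 ≤ b i) :
    (∀ i : Fin n, rowHb b ((i : ℕ) + 1) = (b ∘ Tuple.sort b) i) ∧
    ((∀ i : Fin n, rowHb b ((i : ℕ) + 1) ≤ a ((i : ℕ) + 1)) ↔ IsAPF a b) := by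
  refine ⟨rowHb_succ b, ?_⟩
  simp only [rowHb_succ, IsAPF, hb, implies_true, true_and]

/-- Lemma 2.1: in the construction of `H(b)`, the cell placed in the `i`-th column from
the right lies in row `b'_i` (where `b'` is the increasing rearrangement of `b`);
consequently all cells of `H(b)` lie inside the Young diagram `Y_a` (whose `i`-th column
from the right has length `a_i`) if and only if `b` is an `a`-parking function. -/
theorem stmt8 (n : ℕ) (hn : 1 ≤ n) (a : ℕ → ℕ)
    (hpos : ∀ i, 1 ≤ i → i ≤ n → 1 ≤ a i)
    (hmono : ∀ i j, 1 ≤ i → i ≤ j → j ≤ n → a i ≤ a j)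
    (b : Fin n → ℕ) (hb : ∀ i, 1 ≤ b i) :
    (∀ i : Fin n, rowHb b ((i : ℕ) + 1) = (b ∘ Tuple.sort b) i) ∧
    ((∀ i : Fin n, rowHb b ((i : ℕ) + 1) ≤ a ((i : ℕ) + 1)) ↔ IsAPF a b) :=
  stmt8_general n a b hb
end

section
/- Let a = (a_1,…,a_n) be a non-decreasing sequence of positive integers, let H ∈ 𝓗_a, let σ_i be a moveable cell of H, and let H' ∈ 𝓗_a be obtained from H by moving σ_i one row in its assigned direction. Then: (a) σ_i is moveable in the opposite direction in H'; (b) if j ≠ i and σ_j is moveable in H, then σ_j is moveable in the same direction in H'; (c) if σ_j is not moveable in H, then σ_j is not moveable in H'. -/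
/-!
Moving `σ_c` in its assigned direction changes the parity of its row but not the sign of
`σ_c - σ_{c+1}`, so it reverses the assigned direction of `σ_c`, and moving `σ_c` once more
returns to `H`; this reduces (c) to (b). The assigned direction of any other cell depends only
on its own row, so the content of (b) is that a cell `σ_j` moveable down in `H` stays so in `H'`.
Properness is a condition on single cells and on pairs of cells, and the only pair not already
checked in `H'` or in `H` with `σ_j` moved down is `(σ_c, σ_j)`. The delicate case is `σ_c`
moving up into the row `σ_j` moves down to; there the assigned direction of `σ_c`, read
against `σ_{c+1}`, gives the order of `σ_c` and `σ_j` that the parity of that row requires.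
-/

open Finset
open scoped Classical

/-- A properly filled horizontal strip inside the Young diagram `Y_a`
(columns 0-indexed from the left by `c : Fin n`, so the (0-indexed) column `c`
has length `a (n - c)`; rows are 1-indexed from the top; `num c ∈ {1, …, n}` is
the number written in the cell of column `c`). -/
def IsPFHS {n : ℕ} (a : ℕ → ℕ) (row num : Fin n → ℕ) : Prop :=
  (∀ c : Fin n, 1 ≤ row c ∧ row c ≤ a (n - (c : ℕ))) ∧
  (∀ c c' : Fin n, c ≤ c' → row c' ≤ row c) ∧
  (∀ c, 1 ≤ num c ∧ num c ≤ n) ∧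
  Function.Injective num ∧
  (∀ c c' : Fin n, c < c' → row c = row c' → (Odd (row c) ↔ num c < num c'))

/-- The number written immediately to the right of column `c`, with the imaginary
cell `σ_{n+1} = n + 1` just outside the diagram. -/
def nextVal {n : ℕ} (num : Fin n → ℕ) (c : Fin n) : ℕ :=
  if h : (c : ℕ) + 1 < n then num ⟨(c : ℕ) + 1, h⟩ else n + 1

/-- The assigned direction of the cell in column `c` is *up*, i.e.
`ε_c = sgn(σ_c - σ_{c+1}) (-1)^{r(σ_c)} = -1`. -/
def AssignedUp {n : ℕ} (row num : Fin n → ℕ) (c : Fin n) : Prop :=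
  (nextVal num c < num c ∧ Odd (row c)) ∨ (num c < nextVal num c ∧ Even (row c))

/-- The cell in column `c` is moveable up: its assigned direction is up. -/
def MoveableUp {n : ℕ} (row num : Fin n → ℕ) (c : Fin n) : Prop :=
  AssignedUp row num c

/-- The cell in column `c` is moveable down: its assigned direction is down, it is not
the bottom cell of its column, and moving it one row down again yields a properly
filled horizontal strip. -/
def MoveableDown {n : ℕ} (a : ℕ → ℕ) (row num : Fin n → ℕ) (c : Fin n) : Prop :=
  ¬AssignedUp row num c ∧ row c < a (n - (c : ℕ)) ∧
    IsPFHS a (Function.update row c (row c + 1)) num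

open Function

section HorizontalStrip

variable {n : ℕ} {a : ℕ → ℕ} {row num : Fin n → ℕ}

def PairProper (num : Fin n → ℕ) (x y : Fin n) (rx ry : ℕ) : Prop :=
  (x ≤ y → ry ≤ rx) ∧ (x < y → rx = ry → (Odd rx ↔ num x < num y))

lemma isPFHS_iff :
    IsPFHS a row num ↔ (∀ c : Fin n, 1 ≤ row c ∧ row c ≤ a (n - (c : ℕ))) ∧
      (∀ c, 1 ≤ num c ∧ num c ≤ n) ∧ Injective num ∧
      ∀ x y, PairProper num x y (row x) (row y) := by
  simp only [IsPFHS, PairProper, forall_and]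
  tauto

lemma IsPFHS.update_update {c j : Fin n} {u v : ℕ} (hcj : c ≠ j)
    (hc : IsPFHS a (update row c u) num) (hj : IsPFHS a (update row j v) num)
    (hcj_pair : PairProper num c j u v) (hjc_pair : PairProper num j c v u) :
    IsPFHS a (update (update row c u) j v) num := by
  rw [isPFHS_iff] at *
  obtain ⟨hc_bound, hnum, hinj, hc_pair⟩ := hc
  obtain ⟨hj_bound, -, -, hj_pair⟩ := hj
  have off_j : ∀ z, z ≠ j → update (update row c u) j v z = update row c u z :=
    fun z hz => update_of_ne hz _ _
  have off_c : ∀ z, z ≠ c → update (update row c u) j v z = update row j v z :=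
    fun z hz => by rw [update_comm hcj, update_of_ne hz]
  refine ⟨fun x => ?_, hnum, hinj, fun x y => ?_⟩
  · rcases eq_or_ne x j with rfl | hx
    · simpa using hj_bound x
    · rw [off_j x hx]; exact hc_bound x
  · by_cases hxy_j : x ≠ j ∧ y ≠ j
    · rw [off_j x hxy_j.1, off_j y hxy_j.2]; exact hc_pair x y
    by_cases hxy_c : x ≠ c ∧ y ≠ c
    · rw [off_c x hxy_c.1, off_c y hxy_c.2]; exact hj_pair x y
    obtain ⟨rfl, rfl⟩ | ⟨rfl, rfl⟩ : (x = c ∧ y = j) ∨ (x = j ∧ y = c) := by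
      grind
    · simpa [update_of_ne hcj] using hcj_pair
    · simpa [update_comm hcj, update_of_ne hcj.symm] using hjc_pair

lemma IsPFHS.num_ne_nextVal (hH : IsPFHS a row num) (c : Fin n) : num c ≠ nextVal num c := by
  unfold nextVal
  split_ifs with h
  · intro he
    simpa [Fin.ext_iff] using hH.2.2.2.1 he
  · have := (hH.2.2.1 c).2
    omega

/-- `ε_c = -1` says that `σ_c` and `σ_{c+1}` are ordered as in a row of the other parity. -/
lemma assignedUp_iff {c : Fin n} (hne : num c ≠ nextVal num c) :
    AssignedUp row num c ↔ (Even (row c) ↔ num c < nextVal num c) := by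
  unfold AssignedUp
  simp only [Nat.odd_iff, Nat.even_iff]
  omega

lemma assignedUp_update_of_ne {c j : Fin n} (hjc : j ≠ c) (u : ℕ) :
    AssignedUp (update row c u) num j ↔ AssignedUp row num j := by
  simp only [AssignedUp, update_of_ne hjc]

lemma pairProper_of_lt {x y : Fin n} (hyx : y < x) (rx ry : ℕ) : PairProper num x y rx ry :=
  ⟨fun hxy => absurd hxy (not_le.2 hyx), fun hxy => absurd hxy (lt_asymm hyx)⟩

noncomputable def moveInAssignedDirection (row num : Fin n → ℕ) (c : Fin n) : Fin n → ℕ :=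
  update row c (if AssignedUp row num c then row c - 1 else row c + 1)

lemma assignedUp_moveInAssignedDirection_self {c : Fin n} (hne : num c ≠ nextVal num c)
    (hrow : 1 ≤ row c) :
    AssignedUp (moveInAssignedDirection row num c) num c ↔ ¬AssignedUp row num c := by
  rw [assignedUp_iff hne, assignedUp_iff hne, moveInAssignedDirection, update_self]
  split_ifs <;> simp only [Nat.even_iff] <;> omega

lemma moveInAssignedDirection_moveInAssignedDirection {c : Fin n} (hne : num c ≠ nextVal num c)
    (hrow : 1 ≤ row c) :
    moveInAssignedDirection (moveInAssignedDirection row num c) num c = row := by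
  have hflip := assignedUp_moveInAssignedDirection_self hne hrow
  unfold moveInAssignedDirection at hflip ⊢
  rw [update_idem, update_self]
  split_ifs at hflip ⊢
  · tauto
  · rw [Nat.sub_add_cancel hrow, update_eq_self]
  · rw [Nat.add_sub_cancel, update_eq_self]
  · tauto

lemma IsPFHS.moveableDown_moveInAssignedDirection_self (hH : IsPFHS a row num) {c : Fin n}
    (hA : AssignedUp row num c) : MoveableDown a (moveInAssignedDirection row num c) num c := by
  have hrow := (hH.1 c).1
  refine ⟨by rw [assignedUp_moveInAssignedDirection_self (hH.num_ne_nextVal c) hrow]; tauto,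
    ?_, ?_⟩ <;> rw [moveInAssignedDirection, update_self, if_pos hA]
  · have := (hH.1 c).2
    omega
  · rwa [update_idem, Nat.sub_add_cancel hrow, update_eq_self]

/-- Otherwise `σ_c` and `σ_j` would share a row both in `H'` and after moving `σ_j` down, and the
two rows have different parities. -/
lemma row_ne_succ_of_moveUp {c j : Fin n} (hc : IsPFHS a (update row c (row c - 1)) num)
    (hj : IsPFHS a (update row j (row j + 1)) num) (hcj : c < j) : row c ≠ row j + 1 := by
  intro h
  have hc_par := hc.2.2.2.2 c j hcj (by simp [update_of_ne hcj.ne']; omega)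
  have hj_par := hj.2.2.2.2 c j hcj (by simp [update_of_ne hcj.ne]; omega)
  simp only [update_self, update_of_ne hcj.ne] at hc_par hj_par
  rw [h, Nat.add_sub_cancel] at hc_par
  rw [h] at hj_par
  simp only [Nat.odd_iff] at hc_par hj_par
  omega

/-- Either `σ_{c+1} = σ_j`, or `σ_{c+1}` lies in the row `row j + 1` to which `σ_j` moves; in
both cases the assigned direction of `σ_c` fixes the order of `σ_c` and `σ_j`. -/
lemma odd_succ_iff_of_assignedUp {c j : Fin n} (hH : IsPFHS a row num)
    (hj : IsPFHS a (update row j (row j + 1)) num) (hcj : c < j) (hA : AssignedUp row num c)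
    (hrow : row c = row j + 2) : Odd (row j + 1) ↔ num c < num j := by
  have hk : (c : ℕ) + 1 < n := by have := j.isLt; omega
  set k : Fin n := ⟨c + 1, hk⟩
  have hck : c < k := Fin.lt_def.2 (Nat.lt_succ_self _)
  have hkj : k ≤ j := Fin.le_def.2 hcj
  have hck_par : Odd (row j + 1) ↔ num c < num k := by
    rw [assignedUp_iff (hH.num_ne_nextVal c), nextVal, dif_pos hk, hrow] at hA
    rw [← hA, Nat.odd_iff, Nat.even_iff]
    omega
  rcases hkj.eq_or_lt with hkj | hkj
  · rwa [hkj] at hck_par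
  have hkc_row := hH.2.1 c k hck.le
  have hjk_row := hj.2.1 k j hkj.le
  simp only [update_self, update_of_ne hkj.ne] at hjk_row
  rcases (show row k = row j + 1 ∨ row k = row c by omega) with hk_row | hk_row
  · have hkj_par := hj.2.2.2.2 k j hkj (by simp [update_of_ne hkj.ne]; omega)
    simp only [update_of_ne hkj.ne, hk_row, hck_par] at hkj_par
    rw [hck_par]
    omega
  · have hck_par' := hH.2.2.2.2 c k hck hk_row.symm
    rw [hrow] at hck_par'
    simp only [Nat.odd_iff] at hck_par hck_par'
    omega

lemma pairProper_moveInAssignedDirection_of_lt {c j : Fin n} (hH : IsPFHS a row num)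
    (hH' : IsPFHS a (moveInAssignedDirection row num c) num)
    (hj : IsPFHS a (update row j (row j + 1)) num) (hcj : c < j) :
    PairProper num c j (moveInAssignedDirection row num c c) (row j + 1) := by
  have hjc_row : row j + 1 ≤ row c := by
    simpa [update_of_ne hcj.ne] using hj.2.1 c j hcj.le
  unfold moveInAssignedDirection at hH' ⊢
  rw [update_self]
  split_ifs at hH' ⊢ with hA
  · have := row_ne_succ_of_moveUp hH' hj hcj
    refine ⟨fun _ => by omega, fun _ h => ?_⟩
    rw [h]
    exact odd_succ_iff_of_assignedUp hH hj hcj hA (by omega)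
  · exact ⟨fun _ => by omega, fun _ h => by omega⟩

lemma MoveableDown.moveInAssignedDirection_of_ne {c j : Fin n} (hj : MoveableDown a row num j)
    (hH : IsPFHS a row num) (hH' : IsPFHS a (moveInAssignedDirection row num c) num)
    (hjc : j ≠ c) : MoveableDown a (moveInAssignedDirection row num c) num j := by
  obtain ⟨hnA, hlt, hR⟩ := hj
  have hrow_j : moveInAssignedDirection row num c j = row j := update_of_ne hjc _ _
  refine ⟨by rwa [moveInAssignedDirection, assignedUp_update_of_ne hjc], by rwa [hrow_j], ?_⟩
  have hmove : moveInAssignedDirection row num c =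
      update row c (moveInAssignedDirection row num c c) := by
    rw [moveInAssignedDirection, update_self]
  rw [hrow_j, hmove]
  refine IsPFHS.update_update hjc.symm (hmove ▸ hH') hR ?_ ?_
  · rcases hjc.lt_or_gt with hjc | hcj
    · exact pairProper_of_lt hjc _ _
    · exact pairProper_moveInAssignedDirection_of_lt hH hH' hR hcj
  · rcases hjc.lt_or_gt with hjc | hcj
    · have := hH'.2.1 j c hjc.le
      rw [hrow_j] at this
      exact ⟨fun _ => by omega, fun _ h => by omega⟩
    · exact pairProper_of_lt hcj _ _

end HorizontalStrip

theorem stmt10_general (n : ℕ) (a : ℕ → ℕ)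
    (row num : Fin n → ℕ) (hH : IsPFHS a row num) (c : Fin n)
    (hmov : MoveableUp row num c ∨ MoveableDown a row num c)
    (row' : Fin n → ℕ)
    (hrow' : row' =
      Function.update row c (if AssignedUp row num c then row c - 1 else row c + 1))
    (hH' : IsPFHS a row' num) :
    ((AssignedUp row num c → MoveableDown a row' num c) ∧
      (¬AssignedUp row num c → MoveableUp row' num c)) ∧
    (∀ j : Fin n, j ≠ c →
      (MoveableUp row num j → MoveableUp row' num j) ∧
      (MoveableDown a row num j → MoveableDown a row' num j)) ∧
    (∀ j : Fin n, ¬(MoveableUp row num j ∨ MoveableDown a row num j) →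
      ¬(MoveableUp row' num j ∨ MoveableDown a row' num j)) := by
  obtain rfl : row' = moveInAssignedDirection row num c := hrow'
  have hne := hH.num_ne_nextVal c
  have hflip := assignedUp_moveInAssignedDirection_self hne (hH.1 c).1
  have hback := moveInAssignedDirection_moveInAssignedDirection hne (hH.1 c).1
  refine ⟨⟨hH.moveableDown_moveInAssignedDirection_self, hflip.2⟩,
    fun j hjc =>
      ⟨(assignedUp_update_of_ne hjc _).2, (·.moveInAssignedDirection_of_ne hH hH' hjc)⟩,
    fun j hj => ?_⟩
  rcases eq_or_ne j c with rfl | hjc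
  · exact absurd hmov hj
  rintro (hup | hdown)
  · exact hj (Or.inl ((assignedUp_update_of_ne hjc _).1 hup))
  · have := hdown.moveInAssignedDirection_of_ne hH' (by rwa [hback]) hjc
    rw [hback] at this
    exact hj (Or.inr this)

/-- Lemma 2.2: if `H' ∈ 𝓗_a` is obtained from `H ∈ 𝓗_a` by moving a moveable cell `σ_c`
one row in its assigned direction, then (a) `σ_c` is moveable in the opposite direction
in `H'`; (b) any other moveable cell of `H` is moveable in the same direction in `H'`;
(c) any non-moveable cell of `H` is not moveable in `H'`. -/
theorem stmt10 (n : ℕ) (hn : 1 ≤ n) (a : ℕ → ℕ)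
    (hpos : ∀ i, 1 ≤ i → i ≤ n → 1 ≤ a i)
    (hmono : ∀ i j, 1 ≤ i → i ≤ j → j ≤ n → a i ≤ a j)
    (row num : Fin n → ℕ) (hH : IsPFHS a row num) (c : Fin n)
    (hmov : MoveableUp row num c ∨ MoveableDown a row num c)
    (row' : Fin n → ℕ)
    (hrow' : row' =
      Function.update row c (if AssignedUp row num c then row c - 1 else row c + 1))
    (hH' : IsPFHS a row' num) :
    ((AssignedUp row num c → MoveableDown a row' num c) ∧
      (¬AssignedUp row num c → MoveableUp row' num c)) ∧
    (∀ j : Fin n, j ≠ c →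
      (MoveableUp row num j → MoveableUp row' num j) ∧
      (MoveableDown a row num j → MoveableDown a row' num j)) ∧
    (∀ j : Fin n, ¬(MoveableUp row num j ∨ MoveableDown a row num j) →
      ¬(MoveableUp row' num j ∨ MoveableDown a row' num j)) :=
  stmt10_general n a row num hH c hmov row' hrow' hH'
end

section
/- Let a = (a_1,…,a_n) be a non-decreasing sequence of positive integers with a_1 even. Then every properly filled horizontal strip H ∈ 𝓗_a has at least one moveable cell. -/
open Finset

/-! If no cell points up, the last cell points down although its right neighbour is the
imaginary cell `n + 1`, so its row `r` is odd; as `a_1` is even, `r < a_1`. Let `c` be the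
leftmost cell of row `r`. Every column is at least `a_1` long, and every cell left of `c` lies
below row `r`, so `c` can be pushed down to the even row `r + 1`. The filling stays proper
there: if row `r + 1` already has cells, the last of them is the left neighbour of `c`, which
points down and hence is larger than `c`, and the even row `r + 1` decreases towards it. -/

open Function

section Direction

variable {n : ℕ} {row num : Fin n → ℕ} {c : Fin n}

theorem nextVal_eq_num_of_val_add_one_eq {d : Fin n} (h : (c : ℕ) + 1 = d) :
    nextVal num c = num d := by
  rw [nextVal, dif_pos (h ▸ d.isLt)]
  exact congrArg num (Fin.ext h)

theorem nextVal_eq_of_val_add_one_eq_n (h : (c : ℕ) + 1 = n) : nextVal num c = n + 1 :=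
  dif_neg h.not_lt

theorem odd_row_of_not_assignedUp (hup : ¬AssignedUp row num c)
    (hlt : num c < nextVal num c) : Odd (row c) :=
  Nat.not_even_iff_odd.mp fun heven => hup (Or.inr ⟨hlt, heven⟩)

theorem nextVal_lt_of_not_assignedUp (hup : ¬AssignedUp row num c) (heven : Even (row c))
    (hne : num c ≠ nextVal num c) : nextVal num c < num c :=
  (not_lt.mp fun hlt => hup (Or.inr ⟨hlt, heven⟩)).lt_of_ne' hne

end Direction

namespace IsPFHS

variable {n : ℕ} {a : ℕ → ℕ} {row num : Fin n → ℕ}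

theorem num_lt_of_lt_of_row_eq_of_even (h : IsPFHS a row num) {d e : Fin n} (hde : d < e)
    (hrow : row d = row e) (heven : Even (row e)) : num e < num d := by
  obtain ⟨-, -, -, hinj, hprop⟩ := h
  have hiff := hprop d e hde hrow
  rw [hrow, ← Nat.not_even_iff_odd] at hiff
  exact (not_lt.mp fun hlt => hiff.mpr hlt heven).lt_of_ne (hinj.ne hde.ne')

theorem update_add_one (h : IsPFHS a row num) {c : Fin n} (hlen : row c < a (n - c))
    (hleft : ∀ d < c, row c < row d)
    (hprop : ∀ d < c, row d = row c + 1 → (Odd (row c + 1) ↔ num d < num c)) :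
    IsPFHS a (update row c (row c + 1)) num := by
  obtain ⟨hbound, hanti, hnum, hinj, hprop'⟩ := h
  refine ⟨fun d => ?_, fun d d' hdd' => ?_, hnum, hinj, fun d d' hdd' hrow => ?_⟩
  · rcases eq_or_ne d c with hdc | hdc
    · subst d
      rw [update_self]
      exact ⟨by omega, hlen⟩
    · rw [update_of_ne hdc]
      exact hbound d
  · rcases eq_or_ne d c with hd | hd <;> rcases eq_or_ne d' c with hd' | hd' <;>
      try subst d
    · subst d'
      exact le_rfl
    · rw [update_self, update_of_ne hd']
      have := hanti c d' hdd'
      omega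
    · subst d'
      rw [update_self, update_of_ne hd]
      exact hleft d (hdd'.lt_of_ne hd)
    · rw [update_of_ne hd, update_of_ne hd']
      exact hanti d d' hdd'
  · rcases eq_or_ne d c with hd | hd <;> rcases eq_or_ne d' c with hd' | hd' <;>
      try subst d
    · subst d'
      exact absurd hdd' (lt_irrefl c)
    · rw [update_self, update_of_ne hd'] at hrow
      have := hanti c d' hdd'.le
      omega
    · subst d'
      rw [update_self, update_of_ne hd] at hrow
      rw [update_of_ne hd, hrow]
      exact hprop d hdd' hrow
    · rw [update_of_ne hd, update_of_ne hd'] at hrow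
      rw [update_of_ne hd]
      exact hprop' d d' hdd' hrow

theorem num_lt_of_row_eq_add_one (h : IsPFHS a row num) (hup : ∀ e, ¬AssignedUp row num e)
    {c d : Fin n} (hdc : d < c) (hleft : ∀ d < c, row c < row d) (hodd : Odd (row c))
    (hd : row d = row c + 1) : num c < num d := by
  obtain ⟨-, hanti, -, hinj, -⟩ := id h
  have hc : (c : ℕ) - 1 < n := by omega
  set e : Fin n := ⟨(c : ℕ) - 1, hc⟩
  have hec : e < c := Fin.mk_lt_of_lt_val (by omega)
  have hde : d ≤ e := Fin.le_iff_val_le_val.mpr (show (d : ℕ) ≤ c - 1 by omega)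
  have hrow_e : row e = row c + 1 := by
    have := hleft e hec
    have := hanti d e hde
    omega
  have heven : Even (row e) := hrow_e ▸ hodd.add_one
  have hnext : nextVal num e = num c := nextVal_eq_num_of_val_add_one_eq (by simp [e]; omega)
  have hce : num c < num e :=
    hnext ▸ nextVal_lt_of_not_assignedUp (hup e) heven (hnext ▸ hinj.ne hec.ne)
  rcases hde.lt_or_eq with hde | rfl
  · exact hce.trans (h.num_lt_of_lt_of_row_eq_of_even hde (hd.trans hrow_e.symm) heven)
  · exact hce

theorem exists_moveableDown (h : IsPFHS a row num) (hn : 1 ≤ n)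
    (hshort : ∀ c : Fin n, a 1 ≤ a (n - c)) (heven : Even (a 1))
    (hup : ∀ c, ¬AssignedUp row num c) : ∃ c, MoveableDown a row num c := by
  obtain ⟨hbound, hanti, hnum, -, -⟩ := id h
  set L : Fin n := ⟨n - 1, by omega⟩
  have hodd : Odd (row L) := odd_row_of_not_assignedUp (hup L) <| by
    rw [nextVal_eq_of_val_add_one_eq_n (by simp [L]; omega)]
    have := hnum L
    omega
  have hlt : row L < a 1 := by
    have hLlen : n - (L : ℕ) = 1 := by simp [L]; omega
    refine (hLlen ▸ (hbound L).2).lt_of_ne fun heq => ?_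
    exact Nat.not_odd_iff_even.mpr heven (heq ▸ hodd)
  obtain ⟨c, hcL, hcmin⟩ := wellFounded_lt.has_min {d | row d = row L} ⟨L, rfl⟩
  replace hcL : row c = row L := hcL
  have hleft : ∀ d < c, row c < row d := fun d hdc =>
    (hanti d c hdc.le).lt_of_ne fun heq => hcmin d (hcL ▸ heq.symm) hdc
  have hlen : row c < a (n - c) := (hcL ▸ hlt).trans_le (hshort c)
  refine ⟨c, hup c, hlen, h.update_add_one hlen hleft fun d hdc hd => ?_⟩
  exact iff_of_false (Nat.not_odd_iff_even.mpr (hcL ▸ hodd).add_one)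
    (h.num_lt_of_row_eq_add_one hup hdc hleft (hcL ▸ hodd) hd).not_gt

end IsPFHS

theorem stmt12_general (n : ℕ) (hn : 1 ≤ n) (a : ℕ → ℕ)
    (hmono : ∀ i j, 1 ≤ i → i ≤ j → j ≤ n → a i ≤ a j)
    (heven : Even (a 1)) :
    ∀ row num : Fin n → ℕ, IsPFHS a row num →
      ∃ c : Fin n, MoveableUp row num c ∨ MoveableDown a row num c := by
  intro row num h
  by_cases hup : ∃ c, AssignedUp row num c
  · obtain ⟨c, hc⟩ := hup
    exact ⟨c, Or.inl hc⟩
  simp only [not_exists] at hup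
  have hshort : ∀ c : Fin n, a 1 ≤ a (n - c) := fun c => hmono 1 _ le_rfl (by omega) (by omega)
  obtain ⟨c, hc⟩ := h.exists_moveableDown hn hshort heven hup
  exact ⟨c, Or.inr hc⟩

/-- First part of Lemma 2.3: if `a_1` is even then every properly filled horizontal
strip in `Y_a` has at least one moveable cell, i.e. `𝓗_a - 𝓗̃_a = ∅`. -/
theorem stmt12 (n : ℕ) (hn : 1 ≤ n) (a : ℕ → ℕ)
    (hpos : ∀ i, 1 ≤ i → i ≤ n → 1 ≤ a i)
    (hmono : ∀ i j, 1 ≤ i → i ≤ j → j ≤ n → a i ≤ a j)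
    (heven : Even (a 1)) :
    ∀ row num : Fin n → ℕ, IsPFHS a row num →
      ∃ c : Fin n, MoveableUp row num c ∨ MoveableDown a row num c :=
  stmt12_general n hn a hmono heven
end

section
/- Let a = (a_1,…,a_n) be a non-decreasing sequence of positive integers with a_1 odd, and let S = {i ∈ [n−1] : a_{i+1} is odd}. A properly filled horizontal strip H ∈ 𝓗_a has no moveable cells if and only if the cell σ_i is at the bottom of column i for every i ∈ [n] and the permutation σ_n σ_{n−1} ⋯ σ_1 has descent set S. In particular, the number of strips in 𝓗_a with no moveable cells equals β_n(S), and every such strip H satisfies s(H) = a_1 + a_2 + ⋯ + a_n − n. -/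
open Finset

/-- `s(H)`: the number of cells of `Y_a` lying strictly above a cell of the strip
with row function `row`. -/
def sCells {n : ℕ} (a : ℕ → ℕ) (row : Fin n → ℕ) : ℕ :=
  (((Finset.Icc 1 (a n)) ×ˢ (Finset.univ : Finset (Fin n))).filter
    (fun rc => rc.1 ≤ a (n - (rc.2 : ℕ)) ∧ rc.1 < row rc.2)).card

/-!
Suppose a strip has no moveable cell but some cell is above the bottom of its column, and let `p`
be the leftmost such cell. Every cell left of `p` sits at the bottom of a column at least as long,
hence strictly lower than `p`. Either `p` can be moved down one row, or the parity rule of the row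
below fails between some cell of that row and `p`; in the latter case the cell just left of `p`
lies in that row and is assigned up. So a stuck strip runs along the bottom of `Y_a`. There the
cell in column `c` is assigned down iff the step `σ_c → σ_{c+1}` rises exactly when the column has
odd length; for the last column this holds because `σ_{n+1} = n + 1` and `a_1` is odd. Read
backwards, this says that the word `σ_n ⋯ σ_1` has descent set `S`. A strip along the bottom is
determined by its word, and has `s(H) = ∑ (a_i - 1)`.
-/

abbrev bottomRow (n : ℕ) (a : ℕ → ℕ) (c : Fin n) : ℕ := a (n - c)

def HasNoMoveableCell {n : ℕ} (a : ℕ → ℕ) (row num : Fin n → ℕ) : Prop :=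
  ∀ c : Fin n, ¬(MoveableUp row num c ∨ MoveableDown a row num c)

def StepParity {n : ℕ} (a : ℕ → ℕ) (num : Fin n → ℕ) : Prop :=
  ∀ (c : Fin n) (h : (c : ℕ) + 1 < n), (Odd (a (n - c)) ↔ num c < num ⟨c + 1, h⟩)

section Strips

variable {n : ℕ} {a : ℕ → ℕ} {row num : Fin n → ℕ}

lemma nextVal_of_lt {c : Fin n} (h : (c : ℕ) + 1 < n) : nextVal num c = num ⟨c + 1, h⟩ :=
  dif_pos h

lemma nextVal_of_not_lt {c : Fin n} (h : ¬(c : ℕ) + 1 < n) : nextVal num c = n + 1 :=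
  dif_neg h

lemma num_ne_nextVal (hnum : ∀ c, 1 ≤ num c ∧ num c ≤ n) (hinj : Function.Injective num)
    (c : Fin n) : num c ≠ nextVal num c := by
  unfold nextVal
  split_ifs with h
  · exact hinj.ne (Fin.ne_of_val_ne (by simp))
  · have := (hnum c).2
    omega

lemma not_assignedUp_iff {c : Fin n} (hne : num c ≠ nextVal num c) :
    ¬AssignedUp row num c ↔ (Odd (row c) ↔ num c < nextVal num c) := by
  rcases Nat.even_or_odd (row c) with h | h
  · simp only [AssignedUp, h, Nat.not_odd_iff_even.mpr h, and_true, and_false, false_or,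
      false_iff, not_lt]
  · simp only [AssignedUp, h, Nat.not_even_iff_odd.mpr h, and_true, and_false, or_false,
      true_iff, not_lt]
    omega

lemma bottomRow_antitone (hmono : ∀ i j, 1 ≤ i → i ≤ j → j ≤ n → a i ≤ a j) :
    Antitone (bottomRow n a) := fun c c' h => by
  have : (c : ℕ) ≤ c' := h
  exact hmono _ _ (by omega) (by omega) (by omega)

lemma isPFHS_update_succ (hP : IsPFHS a row num) {p : Fin n} (hp : row p < a (n - p))
    (hleft : ∀ c < p, row p < row c)
    (hpar : ∀ c < p, row c = row p + 1 → (Odd (row p + 1) ↔ num c < num p)) :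
    IsPFHS a (Function.update row p (row p + 1)) num := by
  obtain ⟨hbound, hanti, hnum, hinj, hrowpar⟩ := hP
  refine ⟨fun c => ?_, fun c c' hcc' => ?_, hnum, hinj, fun c c' hcc' hrow => ?_⟩
  · rcases eq_or_ne c p with rfl | hc
    · simp only [Function.update_self]
      omega
    · simpa only [Function.update_of_ne hc] using hbound c
  · rcases eq_or_ne c' p with rfl | hc'
    · rcases eq_or_ne c c' with rfl | hc
      · rfl
      · simp only [Function.update_self, Function.update_of_ne hc]
        exact hleft c (lt_of_le_of_ne hcc' hc)
    · rw [Function.update_of_ne hc']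
      rcases eq_or_ne c p with rfl | hc
      · have := hanti c c' hcc'
        simp only [Function.update_self]
        omega
      · simpa only [Function.update_of_ne hc] using hanti c c' hcc'
  · rcases eq_or_ne c' p with rfl | hc'
    · have hc : c ≠ c' := hcc'.ne
      simp only [Function.update_self, Function.update_of_ne hc] at hrow ⊢
      rw [hrow]
      exact hpar c hcc' hrow
    · rw [Function.update_of_ne hc'] at hrow
      rcases eq_or_ne c p with rfl | hc
      · have := hanti c c' hcc'.le
        simp only [Function.update_self] at hrow
        omega
      · simp only [Function.update_of_ne hc] at hrow ⊢
        exact hrowpar c c' hcc' hrow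

lemma assignedUp_of_not_odd_iff_lt (hP : IsPFHS a row num) {c q : Fin n} (hcq : c ≤ q)
    (hrow : row c = row q) (hq : (q : ℕ) + 1 < n)
    (hbad : ¬(Odd (row q) ↔ num c < num ⟨q + 1, hq⟩)) : AssignedUp row num q := by
  obtain ⟨-, -, hnum, hinj, hrowpar⟩ := hP
  have hcq_num : (Odd (row q) → num c ≤ num q) ∧ (¬Odd (row q) → num q ≤ num c) := by
    rcases hcq.eq_or_lt with rfl | hlt
    · exact ⟨fun _ => le_rfl, fun _ => le_rfl⟩
    · have := hrowpar c q hlt hrow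
      rw [hrow] at this
      exact ⟨fun h => (this.mp h).le, fun h => not_lt.mp (mt this.mpr h)⟩
  by_contra hup
  rw [not_assignedUp_iff (num_ne_nextVal hnum hinj q), nextVal_of_lt hq] at hup
  have hne : num q ≠ num ⟨q + 1, hq⟩ := hinj.ne (Fin.ne_of_val_ne (by simp))
  by_cases hodd : Odd (row q)
  · have := hcq_num.1 hodd
    have := hup.mp hodd
    exact hbad (iff_of_true hodd (by omega))
  · have := hcq_num.2 hodd
    have := mt hup.mpr hodd
    exact hbad (iff_of_false hodd (by omega))

lemma eq_bottomRow_of_hasNoMoveableCell (hmono : ∀ i j, 1 ≤ i → i ≤ j → j ≤ n → a i ≤ a j)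
    (hP : IsPFHS a row num) (h : HasNoMoveableCell a row num) : row = bottomRow n a := by
  by_contra hne
  have hlow : ∃ c, row c < a (n - c) := by
    by_contra! hall
    exact hne (funext fun c => le_antisymm (hP.1 c).2 (hall c))
  obtain ⟨p, hp, hpmin⟩ := wellFounded_lt.has_min {c | row c < a (n - c)} hlow
  replace hp : row p < a (n - p) := hp
  have hleft : ∀ c < p, row p < row c := fun c hcp => by
    have hbot : row c = a (n - c) := le_antisymm (hP.1 c).2 (not_lt.mp (hpmin c · hcp))
    have := bottomRow_antitone hmono hcp.le
    simp only [bottomRow] at this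
    omega
  by_cases hpar : ∀ c < p, row c = row p + 1 → (Odd (row p + 1) ↔ num c < num p)
  · exact h p (Or.inr ⟨fun hup => h p (Or.inl hup), hp, isPFHS_update_succ hP hp hleft hpar⟩)
  · simp only [not_forall] at hpar
    obtain ⟨c, hcp, hrow, hbad⟩ := hpar
    have hcp' : (c : ℕ) < p := hcp
    have hq : p - 1 + 1 < n := by omega
    set q : Fin n := ⟨p - 1, by omega⟩
    have hcq : c ≤ q := Fin.le_def.mpr (by simp [q]; omega)
    have hqrow : row q = row p + 1 := by
      have := hP.2.1 c q hcq
      have := hleft q (Fin.lt_def.mpr (by simp [q]; omega))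
      omega
    have hqp : (⟨q + 1, hq⟩ : Fin n) = p := Fin.ext (by simp [q]; omega)
    refine h q (Or.inl (assignedUp_of_not_odd_iff_lt hP hcq (hrow.trans hqrow.symm) hq ?_))
    rwa [hqp, hqrow]

lemma forall_not_assignedUp_bottomRow_iff (hodd : Odd (a 1))
    (hnum : ∀ c, 1 ≤ num c ∧ num c ≤ n) (hinj : Function.Injective num) :
    (∀ c, ¬AssignedUp (bottomRow n a) num c) ↔ StepParity a num := by
  simp only [not_assignedUp_iff (num_ne_nextVal hnum hinj _)]
  refine ⟨fun h c hc => by rw [← nextVal_of_lt (num := num) hc]; exact h c, fun h c => ?_⟩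
  by_cases hc : (c : ℕ) + 1 < n
  · rw [nextVal_of_lt hc]
    exact h c hc
  · have hlast : bottomRow n a c = a 1 := congrArg a (by omega)
    rw [nextVal_of_not_lt hc, hlast]
    exact iff_of_true hodd (by have := hnum c; omega)

lemma hasNoMoveableCell_iff (hmono : ∀ i j, 1 ≤ i → i ≤ j → j ≤ n → a i ≤ a j)
    (hodd : Odd (a 1)) (hP : IsPFHS a row num) :
    HasNoMoveableCell a row num ↔ row = bottomRow n a ∧ StepParity a num := by
  have hup_iff := forall_not_assignedUp_bottomRow_iff hodd hP.2.2.1 hP.2.2.2.1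
  constructor
  · intro h
    obtain rfl := eq_bottomRow_of_hasNoMoveableCell hmono hP h
    exact ⟨rfl, hup_iff.mp fun c hup => h c (Or.inl hup)⟩
  · rintro ⟨rfl, hstep⟩ c (hup | hdown)
    · exact hup_iff.mpr hstep c hup
    · exact lt_irrefl _ hdown.2.1

lemma odd_iff_lt_of_stepParity (hmono : ∀ i j, 1 ≤ i → i ≤ j → j ≤ n → a i ≤ a j)
    (hinj : Function.Injective num) (hstep : StepParity a num) {c c' : Fin n} (hlt : c < c')
    (heq : a (n - c) = a (n - c')) : Odd (a (n - c)) ↔ num c < num c' := by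
  obtain ⟨m, hm⟩ := c'
  induction m with
  | zero => exact absurd (Fin.lt_def.mp hlt) (Nat.not_lt_zero _)
  | succ m ih =>
    have hcm : (c : ℕ) ≤ m := Nat.lt_succ_iff.mp hlt
    rcases hcm.eq_or_lt with hcm | hcm
    · rw [show c = ⟨m, by omega⟩ from Fin.ext hcm]
      exact hstep _ hm
    · have hm' : m < n := by omega
      have hsq : a (n - c) = a (n - m) := le_antisymm
        (heq ▸ bottomRow_antitone hmono
          (Fin.le_def.mpr (Nat.le_succ m) : (⟨m, hm'⟩ : Fin n) ≤ ⟨m + 1, hm⟩))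
        (bottomRow_antitone hmono (Fin.le_def.mpr hcm.le : c ≤ ⟨m, hm'⟩))
      have h₁ := ih hm' hcm hsq
      have h₂ : Odd (a (n - c)) ↔ num ⟨m, hm'⟩ < num ⟨m + 1, hm⟩ := hsq ▸ hstep ⟨m, hm'⟩ hm
      have hne₁ : num c ≠ num ⟨m, hm'⟩ := hinj.ne (Fin.ne_of_val_ne hcm.ne)
      have hne₂ : num ⟨m, hm'⟩ ≠ num ⟨m + 1, hm⟩ := hinj.ne (Fin.ne_of_val_ne (by simp))
      by_cases hodd : Odd (a (n - c))
      · exact iff_of_true hodd (by have := h₁.mp hodd; have := h₂.mp hodd; omega)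
      · exact iff_of_false hodd (by have := mt h₁.mpr hodd; have := mt h₂.mpr hodd; omega)

lemma isPFHS_bottomRow (hpos : ∀ i, 1 ≤ i → i ≤ n → 1 ≤ a i)
    (hmono : ∀ i j, 1 ≤ i → i ≤ j → j ≤ n → a i ≤ a j)
    (hnum : ∀ c, 1 ≤ num c ∧ num c ≤ n) (hinj : Function.Injective num)
    (hstep : StepParity a num) : IsPFHS a (bottomRow n a) num :=
  ⟨fun c => ⟨hpos _ (by omega) (by omega), le_rfl⟩, fun _ _ => (bottomRow_antitone hmono ·),
    hnum, hinj, fun _ _ hlt heq => odd_iff_lt_of_stepParity hmono hinj hstep hlt heq⟩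

lemma forall_mem_iff_lt_iff_stepParity {S : Finset ℕ}
    (hS : S = (Icc 1 (n - 1)).filter fun i => Odd (a (i + 1))) :
    (∀ i, ∀ h1 : 1 ≤ i, ∀ h2 : i ≤ n - 1,
      (i ∈ S ↔ num ⟨n - i - 1, by lia⟩ < num ⟨n - i, by lia⟩)) ↔ StepParity a num := by
  subst hS
  simp only [mem_filter, mem_Icc]
  constructor
  · intro h c hc
    have := h (n - 1 - c) (by omega) (by omega)
    simp only [show n - (n - 1 - c) = c + 1 by omega, show n - 1 - c + 1 = n - c by omega,
      Nat.add_sub_cancel, Fin.eta] at this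
    exact ⟨fun hodd => this.mp ⟨⟨by omega, by omega⟩, hodd⟩, fun hlt => (this.mpr hlt).2⟩
  · intro h i h1 h2
    have := h ⟨n - i - 1, by omega⟩ (by simp; omega)
    simp only [show n - (n - i - 1) = i + 1 by omega, show n - i - 1 + 1 = n - i by omega] at this
    exact ⟨fun hi => this.mp hi.2, fun hlt => ⟨⟨h1, h2⟩, this.mpr hlt⟩⟩

lemma isPFHS_and_hasNoMoveableCell_iff (hpos : ∀ i, 1 ≤ i → i ≤ n → 1 ≤ a i)
    (hmono : ∀ i j, 1 ≤ i → i ≤ j → j ≤ n → a i ≤ a j) (hodd : Odd (a 1)) :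
    IsPFHS a row num ∧ HasNoMoveableCell a row num ↔
      row = bottomRow n a ∧ (∀ c, 1 ≤ num c ∧ num c ≤ n) ∧ Function.Injective num ∧
        StepParity a num := by
  constructor
  · rintro ⟨hP, h⟩
    obtain ⟨hrow, hstep⟩ := (hasNoMoveableCell_iff hmono hodd hP).mp h
    exact ⟨hrow, hP.2.2.1, hP.2.2.2.1, hstep⟩
  · rintro ⟨rfl, hnum, hinj, hstep⟩
    have hP := isPFHS_bottomRow hpos hmono hnum hinj hstep
    exact ⟨hP, (hasNoMoveableCell_iff hmono hodd hP).mpr ⟨rfl, hstep⟩⟩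

end Strips

section Permutations

variable {n : ℕ}

-- `σ` is the word `σ_n ⋯ σ_1` of the strip, shifted down by one to take values in `Fin n`.
def numOfPerm (σ : Equiv.Perm (Fin n)) (c : Fin n) : ℕ := σ c.rev + 1

lemma numOfPerm_mem (σ : Equiv.Perm (Fin n)) (c : Fin n) :
    1 ≤ numOfPerm σ c ∧ numOfPerm σ c ≤ n :=
  ⟨Nat.le_add_left _ _, (σ c.rev).isLt⟩

lemma numOfPerm_injective (σ : Equiv.Perm (Fin n)) : Function.Injective (numOfPerm σ) :=
  fun _ _ h => Fin.rev_injective (σ.injective (Fin.ext (Nat.succ_injective h)))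

lemma injective_numOfPerm : Function.Injective (numOfPerm : Equiv.Perm (Fin n) → Fin n → ℕ) :=
  fun σ τ h => Equiv.ext fun j => Fin.ext <| by
    simpa [numOfPerm] using congrFun h j.rev

lemma exists_numOfPerm_eq {num : Fin n → ℕ} (hnum : ∀ c, 1 ≤ num c ∧ num c ≤ n)
    (hinj : Function.Injective num) : ∃ σ : Equiv.Perm (Fin n), numOfPerm σ = num := by
  let f : Fin n → Fin n := fun j => ⟨num j.rev - 1, by have := hnum j.rev; omega⟩
  have hf : Function.Injective f := fun j j' h => by
    have := hnum j.rev
    have := hnum j'.rev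
    exact Fin.rev_injective (hinj (by simp only [f, Fin.mk.injEq] at h; omega))
  refine ⟨Equiv.ofBijective f (Finite.injective_iff_bijective.mp hf), funext fun c => ?_⟩
  have := hnum c
  simp only [numOfPerm, Equiv.ofBijective_apply, Fin.rev_rev, f]
  omega

lemma numOfPerm_eq_permVal (σ : Equiv.Perm (Fin n)) {c : Fin n} {i : ℕ} (h : c + i + 1 = n) :
    numOfPerm σ c = permVal σ i + 1 := by
  rw [numOfPerm, permVal, dif_pos (by omega)]
  congr 3
  ext
  simp only [Fin.val_rev]
  omega

lemma descSet_eq_iff (σ : Equiv.Perm (Fin n)) {S : Finset ℕ} (hS : S ⊆ Icc 1 (n - 1)) :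
    descSet σ = S ↔ ∀ i, ∀ h1 : 1 ≤ i, ∀ h2 : i ≤ n - 1,
      (i ∈ S ↔ numOfPerm σ ⟨n - i - 1, by lia⟩ < numOfPerm σ ⟨n - i, by lia⟩) := by
  have hlt_iff : ∀ i, ∀ h1 : 1 ≤ i, ∀ h2 : i ≤ n - 1,
      (numOfPerm σ ⟨n - i - 1, by lia⟩ < numOfPerm σ ⟨n - i, by lia⟩ ↔
        permVal σ i < permVal σ (i - 1)) := fun i h1 h2 => by
    rw [numOfPerm_eq_permVal σ (i := i) (by simp; omega),
      numOfPerm_eq_permVal σ (i := i - 1) (by simp; omega), Nat.add_lt_add_iff_right]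
  constructor
  · rintro rfl i h1 h2
    simp [descSet, hlt_iff i h1 h2, h1, h2]
  · intro h
    ext i
    simp only [descSet, mem_filter, mem_Icc]
    constructor
    · rintro ⟨⟨h1, h2⟩, hlt⟩
      exact (h i h1 h2).mpr ((hlt_iff i h1 h2).mpr hlt)
    · intro hi
      obtain ⟨h1, h2⟩ := mem_Icc.mp (hS hi)
      exact ⟨⟨h1, h2⟩, (hlt_iff i h1 h2).mp ((h i h1 h2).mp hi)⟩

end Permutations

section Counting

variable {n : ℕ} {a : ℕ → ℕ}

lemma card_hasNoMoveableCell (hpos : ∀ i, 1 ≤ i → i ≤ n → 1 ≤ a i)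
    (hmono : ∀ i j, 1 ≤ i → i ≤ j → j ≤ n → a i ≤ a j) (hodd : Odd (a 1)) {S : Finset ℕ}
    (hS : S = (Icc 1 (n - 1)).filter fun i => Odd (a (i + 1))) :
    Nat.card {H : (Fin n → ℕ) × (Fin n → ℕ) // IsPFHS a H.1 H.2 ∧ HasNoMoveableCell a H.1 H.2}
      = betaN n S := by
  have hdesc (σ : Equiv.Perm (Fin n)) : descSet σ = S ↔ StepParity a (numOfPerm σ) :=
    (descSet_eq_iff σ (hS ▸ filter_subset _ _)).trans (forall_mem_iff_lt_iff_stepParity hS)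
  let toStrip (σ : Equiv.Perm (Fin n)) : (Fin n → ℕ) × (Fin n → ℕ) :=
    (bottomRow n a, numOfPerm σ)
  have hrange : {H : (Fin n → ℕ) × (Fin n → ℕ) | IsPFHS a H.1 H.2 ∧ HasNoMoveableCell a H.1 H.2}
      = toStrip '' {σ | descSet σ = S} := by
    ext ⟨row, num⟩
    simp only [Set.mem_ofPred, isPFHS_and_hasNoMoveableCell_iff hpos hmono hodd, Set.mem_image,
      toStrip, Prod.mk.injEq]
    constructor
    · rintro ⟨rfl, hnum, hinj, hstep⟩
      obtain ⟨σ, rfl⟩ := exists_numOfPerm_eq hnum hinj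
      exact ⟨σ, (hdesc σ).mpr hstep, rfl, rfl⟩
    · rintro ⟨σ, hσ, rfl, rfl⟩
      exact ⟨rfl, numOfPerm_mem σ, numOfPerm_injective σ, (hdesc σ).mp hσ⟩
  have htoStrip : Function.Injective toStrip := fun _ _ h =>
    injective_numOfPerm (congrArg Prod.snd h)
  calc Nat.card {H : (Fin n → ℕ) × (Fin n → ℕ) // IsPFHS a H.1 H.2 ∧ HasNoMoveableCell a H.1 H.2}
      = Nat.card (toStrip '' {σ | descSet σ = S}) := by rw [← hrange]; rfl
    _ = Nat.card {σ : Equiv.Perm (Fin n) | descSet σ = S} :=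
      Nat.card_image_of_injective htoStrip _
    _ = betaN n S := by
      rw [betaN, Nat.card_eq_fintype_card, ← Fintype.card_subtype]
      rfl

lemma sum_univ_fin_sub {M : Type*} [AddCommMonoid M] (f : ℕ → M) :
    ∑ c : Fin n, f (n - c) = ∑ i ∈ Icc 1 n, f i := by
  rw [Fin.sum_univ_eq_sum_range (fun j => f (n - j))]
  exact sum_nbij' (n - ·) (n - ·) (by simp; omega) (by simp; omega) (by simp; omega)
    (by simp; omega) (by simp)

lemma sCells_bottomRow (hpos : ∀ i, 1 ≤ i → i ≤ n → 1 ≤ a i)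
    (hmono : ∀ i j, 1 ≤ i → i ≤ j → j ≤ n → a i ≤ a j) :
    sCells a (bottomRow n a) = ∑ i ∈ Icc 1 n, a i - n := by
  have hcol (c : Fin n) :
      #{r ∈ Icc 1 (a n) | r ≤ a (n - c) ∧ r < a (n - c)} = a (n - c) - 1 := by
    have := hmono (n - c) n (by omega) (by omega) le_rfl
    rw [← Nat.card_Ico 1 (a (n - c))]
    congr 1
    ext r
    simp only [mem_filter, mem_Icc, mem_Ico]
    omega
  rw [sCells, card_filter, sum_product_right]
  simp only [← card_filter, hcol]
  rw [sum_univ_fin_sub (fun i => a i - 1), sum_tsub_distrib _ fun i hi => hpos i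
    (mem_Icc.mp hi).1 (mem_Icc.mp hi).2]
  simp

end Counting

/-- Second part of Lemma 2.3: for `a_1` odd and `S = {i ∈ [n-1] : a_{i+1} odd}`,
a strip `H ∈ 𝓗_a` has no moveable cells iff every cell is at the bottom of its column
and the word `σ_n σ_{n-1} ⋯ σ_1` has descent set `S` (a descent of this word at
position `i` means `σ_{n+1-i} > σ_{n-i}`).  Consequently the number of such strips is
`β_n(S)`, and each of them satisfies `s(H) = a_1 + ⋯ + a_n - n`. -/
theorem stmt13 (n : ℕ) (a : ℕ → ℕ)
    (hpos : ∀ i, 1 ≤ i → i ≤ n → 1 ≤ a i)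
    (hmono : ∀ i j, 1 ≤ i → i ≤ j → j ≤ n → a i ≤ a j)
    (hodd : Odd (a 1))
    (S : Finset ℕ) (hSdef : S = (Finset.Icc 1 (n - 1)).filter fun i => Odd (a (i + 1))) :
    (∀ row num : Fin n → ℕ, IsPFHS a row num →
      ((∀ c : Fin n, ¬(MoveableUp row num c ∨ MoveableDown a row num c)) ↔
        ((∀ c : Fin n, row c = a (n - (c : ℕ))) ∧
          ∀ i, ∀ h1 : 1 ≤ i, ∀ h2 : i ≤ n - 1,
            (i ∈ S ↔ num ⟨n - i - 1, by omega⟩ < num ⟨n - i, by omega⟩)))) ∧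
    Nat.card {H : (Fin n → ℕ) × (Fin n → ℕ) //
        IsPFHS a H.1 H.2 ∧ ∀ c : Fin n, ¬(MoveableUp H.1 H.2 c ∨ MoveableDown a H.1 H.2 c)}
      = betaN n S ∧
    (∀ row num : Fin n → ℕ, IsPFHS a row num →
      (∀ c : Fin n, ¬(MoveableUp row num c ∨ MoveableDown a row num c)) →
      sCells a row = (∑ i ∈ Finset.Icc 1 n, a i) - n) := by
  refine ⟨fun row num hP => ?_, card_hasNoMoveableCell hpos hmono hodd hSdef,
    fun row num hP h => ?_⟩
  · exact (hasNoMoveableCell_iff hmono hodd hP).trans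
      (and_congr funext_iff (forall_mem_iff_lt_iff_stepParity hSdef).symm)
  · rw [((hasNoMoveableCell_iff hmono hodd hP).mp h).1]
    exact sCells_bottomRow hpos hmono
end
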